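/- arXiv:1212.0771 — 3 statements merged into one kernel-verified Lean document; each statement's English description precedes it below -/
import Mathlib

section
/- Let x and y be balanced flush abaci on 2n runners (corresponding to minimal length coset representatives in the type C parabolic quotient). Then x is greater than or equal to y in strong Bruhat order if and only if, for every k ≥ 1, the k-th highest bead of x (reading beads along levels from right to left, starting from the highest level) lies at a position at least as high in reading order as the k-th highest bead of y. -/
/-! Flush abaci with `r` runners, recorded by the level of the lowest bead on each runner
(runners 0-indexed by `Fin r`; entry at level `m` of runner `i` has value `m*(r+1) + (i+1)`). -/

/-- A balanced abacus on `2n` runners: the levels of symmetric runners sum to zero. -/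
def BalancedAbacus (n : ℕ) (a : Fin (2*n) → ℤ) : Prop := ∀ i, a i + a i.rev = 0

/-- `v` is the value of a bead of the flush abacus `a` on `r` runners. -/
def IsBead (r : ℕ) (a : Fin r → ℤ) (v : ℤ) : Prop :=
  ∃ i : Fin r, v % (r+1) = (i : ℤ) + 1 ∧ v ≤ (r+1) * a i + ((i : ℤ) + 1)

/-- `v` is the value of a gap (a non-bead entry) of the abacus `a`. -/
def IsGap (r : ℕ) (a : Fin r → ℤ) (v : ℤ) : Prop :=
  v % (r+1) ≠ 0 ∧ ¬ IsBead r a v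

/-- The core partition of the abacus `a`: row `j` (0-indexed) is the number of gaps smaller
(in reading order) than the bead having exactly `j` beads above it. -/
noncomputable def abacusCore (r : ℕ) (a : Fin r → ℤ) : ℕ → ℕ := fun j =>
  Nat.card {g : ℤ | IsGap r a g ∧ ∃ b : ℤ, IsBead r a b ∧
    Nat.card {b' : ℤ | IsBead r a b' ∧ b < b'} = j ∧ g < b}

/-- Level of runner `i` (0 for an out-of-range index). -/
def aget (r : ℕ) (a : Fin r → ℤ) (i : ℕ) : ℤ := if h : i < r then a ⟨i, h⟩ else 0

/-- The (0-indexed) position of the rightmost runner whose lowest bead is at the highest level. -/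
noncomputable def largestRunner (r : ℕ) (a : Fin r → ℤ) : ℕ :=
  sSup {i : ℕ | ∃ h : i < r, ∀ i', a i' ≤ a ⟨i, h⟩}

def swapIdx (p q x : ℕ) : ℕ := if x = p then q else if x = q then p else x

/-- Action of the Coxeter generator `s_t` (`0 ≤ t ≤ n`) of the affine Weyl group of type `Cₙ`
on balanced flush abaci, in terms of the level vector. -/
def genAct (n : ℕ) (t : ℕ) (a : Fin (2*n) → ℤ) : Fin (2*n) → ℤ := fun x =>
  if t = 0 then
    if x.val = 0 then aget (2*n) a (2*n-1) + 1
    else if x.val = 2*n-1 then aget (2*n) a 0 - 1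
    else a x
  else if t = n then aget (2*n) a (swapIdx (n-1) n x.val)
  else aget (2*n) a (swapIdx (t-1) t (swapIdx (2*n-1-t) (2*n-t) x.val))

/-- Apply a word in the generators to an abacus, leftmost letter first. -/
def applyWord (n : ℕ) (w : List ℕ) (a : Fin (2*n) → ℤ) : Fin (2*n) → ℤ :=
  w.foldl (fun b t => genAct n t b) a

/-- Coxeter length of the minimal coset representative corresponding to the abacus `a`:
the least length of a word in the generators carrying `a` to the identity abacus. -/
noncomputable def abacusLen (n : ℕ) (a : Fin (2*n) → ℤ) : ℕ :=
  sInf {ℓ : ℕ | ∃ w : List ℕ, (∀ t ∈ w, t ≤ n) ∧ applyWord n w a = 0 ∧ w.length = ℓ}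

def skipTwo (p q t : ℕ) : ℕ := if t < p then t else if t + 1 < q then t + 1 else t + 2

/-- Delete runner `j` and its symmetric runner `2n-1-j` from a balanced abacus on `2n` runners
(assuming `2n-1-j < j`), keeping the remaining runners in order with their levels. -/
def deleteRunners (n : ℕ) (a : Fin (2*n) → ℤ) (j : ℕ) : Fin (2*(n-1)) → ℤ :=
  fun t => aget (2*n) a (skipTwo (2*n-1-j) j t.val)

/-- Delete the single runner `j` from an abacus on `r` runners. -/
def deleteOne (r : ℕ) (a : Fin r → ℤ) (j : ℕ) : Fin (r-1) → ℤ :=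
  fun t => aget r a (if t.val < j then t.val else t.val + 1)

/-!
Rank the positions (integers not divisible by `r + 1`) by `posRank r v = v - v / (r + 1)`.
Moving `b` up by one changes `#{gaps ≤ b} - #{beads > b}` by one exactly when `b + 1` is a
position, just as it changes `posRank r b`; far below every bead there are no gaps and the beads
can be counted runner by runner. Hence `#{gaps ≤ b} - #{beads > b} = posRank r b - r - ∑ levels`
for every `b`, and taking for `b` the bead with `j` beads above it, row `j` of the core is
`posRank r b + j - r - ∑ levels`. Balanced abaci have level sum `0`, so comparing row `j` of two
cores amounts to comparing the ranks of their `j`-th highest beads, and `posRank` is strictly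
increasing on positions.
-/

open scoped Classical

section
variable {α : Type*} [LinearOrder α] (P : α → Prop) (b : α)

lemma natCard_and_ge (hfin : {x | P x ∧ b < x}.Finite) :
    Nat.card {x | P x ∧ b ≤ x} = Nat.card {x | P x ∧ b < x} + if P b then 1 else 0 := by
  by_cases hb : P b
  · have hset : {x | P x ∧ b ≤ x} = insert b {x | P x ∧ b < x} := by
      ext x
      simp only [Set.mem_insert_iff, Set.mem_ofPred_eq, le_iff_eq_or_lt]
      constructor
      · rintro ⟨hx, rfl | hlt⟩
        exacts [Or.inl rfl, Or.inr ⟨hx, hlt⟩]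
      · rintro (rfl | ⟨hx, hlt⟩)
        exacts [⟨hb, Or.inl rfl⟩, ⟨hx, Or.inr hlt⟩]
    rw [if_pos hb, hset, Nat.card_coe_set_eq, Set.ncard_insert_of_notMem (by simp) hfin,
      Nat.card_coe_set_eq]
  · rw [if_neg hb, add_zero]
    congr 3
    exact Set.ext fun x => and_congr_right fun hx => Ne.le_iff_lt fun h : b = x => hb (h ▸ hx)

lemma natCard_and_le (hfin : {x | P x ∧ x < b}.Finite) :
    Nat.card {x | P x ∧ x ≤ b} = Nat.card {x | P x ∧ x < b} + if P b then 1 else 0 :=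
  natCard_and_ge (α := αᵒᵈ) P b hfin

end

section
variable {r : ℕ}

def abacusEntry (r : ℕ) (i : Fin r) (m : ℤ) : ℤ := (r + 1) * m + (i + 1)

lemma abacusEntry_ediv_emod (i : Fin r) (m : ℤ) :
    abacusEntry r i m / (r + 1) = m ∧ abacusEntry r i m % (r + 1) = i + 1 := by
  rw [Int.ediv_emod_unique (by positivity)]
  exact ⟨by rw [abacusEntry]; ring, by positivity, by have := i.2; omega⟩

lemma abacusEntry_injective :
    Function.Injective fun p : (_ : Fin r) × ℤ => abacusEntry r p.1 p.2 := by
  rintro ⟨i, m⟩ ⟨i', m'⟩ h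
  obtain ⟨hq, hr⟩ := abacusEntry_ediv_emod i m
  obtain ⟨hq', hr'⟩ := abacusEntry_ediv_emod i' m'
  simp only at h
  rw [h] at hq hr
  have hi : i = i' := Fin.ext (by omega)
  subst hi
  rw [hq] at hq'
  rw [hq']

lemma exists_abacusEntry_eq {v : ℤ} (hv : v % (r + 1) ≠ 0) :
    ∃ i m, abacusEntry r i m = v := by
  have h0 := Int.emod_nonneg v (by positivity : ((r : ℤ) + 1) ≠ 0)
  have h1 := Int.emod_lt_of_pos v (by positivity : (0 : ℤ) < r + 1)
  refine ⟨⟨(v % (r + 1) - 1).toNat, by omega⟩, v / (r + 1), ?_⟩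
  have := Int.mul_ediv_add_emod v (r + 1)
  simp only [abacusEntry]
  omega

lemma isBead_abacusEntry {a : Fin r → ℤ} {i : Fin r} {m : ℤ} :
    IsBead r a (abacusEntry r i m) ↔ m ≤ a i := by
  have hr : (0 : ℤ) < r + 1 := by positivity
  constructor
  · rintro ⟨i', hi', hle⟩
    have hi : i' = i := Fin.ext (by have := (abacusEntry_ediv_emod i m).2; omega)
    subst hi
    simp only [abacusEntry] at hle
    nlinarith
  · intro hm
    exact ⟨i, (abacusEntry_ediv_emod i m).2, by simp only [abacusEntry]; nlinarith⟩

lemma IsBead.emod_ne_zero {a : Fin r → ℤ} {v : ℤ} (hv : IsBead r a v) : v % (r + 1) ≠ 0 := by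
  obtain ⟨i, hi, -⟩ := hv
  omega

lemma isGap_abacusEntry {a : Fin r → ℤ} {i : Fin r} {m : ℤ} :
    IsGap r a (abacusEntry r i m) ↔ a i < m := by
  rw [IsGap, isBead_abacusEntry, (abacusEntry_ediv_emod i m).2, not_le]
  exact and_iff_right (by omega)

lemma lt_abacusEntry_iff (i : Fin r) (V m : ℤ) :
    (r + 1) * V < abacusEntry r i m ↔ V ≤ m := by
  have hi : (i : ℤ) < r := by exact_mod_cast i.2
  simp only [abacusEntry]
  constructor
  · intro h
    by_contra! hm
    nlinarith
  · intro h
    nlinarith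

lemma bddAbove_setOf_isBead (a : Fin r → ℤ) : BddAbove {v | IsBead r a v} := by
  obtain ⟨A, hA⟩ := Finite.exists_le a
  refine ⟨(r + 1) * (A + 1), fun v hv => ?_⟩
  obtain ⟨i, m, rfl⟩ := exists_abacusEntry_eq hv.emod_ne_zero
  rw [Set.mem_ofPred_eq, isBead_abacusEntry] at hv
  have := (lt_abacusEntry_iff i (A + 1) m).not.mpr (by linarith [hA i])
  omega

lemma bddBelow_setOf_isGap (a : Fin r → ℤ) : BddBelow {v | IsGap r a v} := by
  obtain ⟨V, hV⟩ := Finite.exists_ge a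
  refine ⟨(r + 1) * V, fun v hv => ?_⟩
  obtain ⟨i, m, rfl⟩ := exists_abacusEntry_eq hv.1
  rw [Set.mem_ofPred_eq, isGap_abacusEntry] at hv
  exact ((lt_abacusEntry_iff i V m).mpr (by linarith [hV i])).le

lemma natCard_beads_gt (a : Fin r → ℤ) (V : ℤ) :
    Nat.card {v | IsBead r a v ∧ (r + 1) * V < v} = ∑ i, (a i + 1 - V).toNat := by
  have hset : {v | IsBead r a v ∧ (r + 1) * V < v} =
      ↑((Finset.univ.sigma fun i => Finset.Icc V (a i)).image
        fun p => abacusEntry r p.1 p.2) := by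
    ext v
    simp only [Set.mem_ofPred_eq, Finset.coe_image, Finset.coe_sigma, Set.mem_image,
      Set.mem_sigma_iff, Finset.coe_univ, Set.mem_univ, Finset.coe_Icc, Set.mem_Icc, true_and,
      Sigma.exists]
    constructor
    · rintro ⟨hv, hV⟩
      obtain ⟨i, m, rfl⟩ := exists_abacusEntry_eq hv.emod_ne_zero
      exact ⟨i, m, ⟨(lt_abacusEntry_iff i V m).mp hV, isBead_abacusEntry.mp hv⟩, rfl⟩
    · rintro ⟨i, m, ⟨hV, hm⟩, rfl⟩
      exact ⟨isBead_abacusEntry.mpr hm, (lt_abacusEntry_iff i V m).mpr hV⟩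
  rw [hset, Nat.card_coe_set_eq, Set.ncard_coe_finset,
    Finset.card_image_of_injective _ abacusEntry_injective, Finset.card_sigma]
  simp only [Int.card_Icc]

lemma finite_beads_gt (a : Fin r → ℤ) (b : ℤ) : {v | IsBead r a v ∧ b < v}.Finite :=
  BddBelow.finite_of_bddAbove ⟨b, fun _ hv => hv.2.le⟩
    ((bddAbove_setOf_isBead a).mono fun _ hv => hv.1)

lemma finite_gaps_lt (a : Fin r → ℤ) (b : ℤ) : {g | IsGap r a g ∧ g < b}.Finite :=
  BddBelow.finite_of_bddAbove ((bddBelow_setOf_isGap a).mono fun _ hg => hg.1)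
    ⟨b, fun _ hg => hg.2.le⟩

/-- Signed count of the abacus positions (integers not divisible by `r + 1`) in `(0, v]`. -/
def posRank (r : ℕ) (v : ℤ) : ℤ := v - v / (r + 1)

lemma posRank_add_one (v : ℤ) :
    posRank r (v + 1) = posRank r v + if (v + 1) % (r + 1) = 0 then 0 else 1 := by
  have hr : (0 : ℤ) < r + 1 := by positivity
  have hv := Int.mul_ediv_add_emod v (r + 1)
  have h0 := Int.emod_nonneg v hr.ne'
  have h1 := Int.emod_lt_of_pos v hr
  by_cases hs : v % (r + 1) = r
  · obtain ⟨hq, hm⟩ : (v + 1) / (r + 1) = v / (r + 1) + 1 ∧ (v + 1) % (r + 1) = 0 :=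
      (Int.ediv_emod_unique hr).mpr ⟨by linarith, le_rfl, hr⟩
    rw [posRank, posRank, hq, if_pos hm]
    ring
  · obtain ⟨hq, hm⟩ : (v + 1) / (r + 1) = v / (r + 1) ∧ (v + 1) % (r + 1) = v % (r + 1) + 1 :=
      (Int.ediv_emod_unique hr).mpr ⟨by linarith, by omega, by omega⟩
    rw [posRank, posRank, hq, if_neg (by omega)]
    ring

lemma posRank_mono : Monotone (posRank r) :=
  monotone_int_of_le_succ fun v => by
    rw [posRank_add_one]
    split_ifs <;> omega

lemma posRank_le_posRank_iff {u v : ℤ} (hu : u % (r + 1) ≠ 0) :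
    posRank r u ≤ posRank r v ↔ u ≤ v := by
  refine ⟨fun h => ?_, fun h => posRank_mono h⟩
  by_contra! hvu
  have hle := posRank_mono (r := r) (Int.le_sub_one_of_lt hvu)
  have hstep := posRank_add_one (r := r) (u - 1)
  rw [sub_add_cancel, if_neg hu] at hstep
  omega

lemma ite_isGap_add_ite_isBead (a : Fin r → ℤ) (v : ℤ) :
    ((if IsGap r a v then 1 else 0) + if IsBead r a v then 1 else 0 : ℤ) =
      if v % (r + 1) = 0 then 0 else 1 := by
  by_cases hb : IsBead r a v
  · simp [IsGap, hb, hb.emod_ne_zero]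
  · by_cases hv : v % (r + 1) = 0 <;> simp [IsGap, hb, hv]

theorem natCard_gaps_le_sub_natCard_beads_gt (a : Fin r → ℤ) (b : ℤ) :
    (Nat.card {g | IsGap r a g ∧ g ≤ b} : ℤ) - Nat.card {v | IsBead r a v ∧ b < v} =
      posRank r b - r - ∑ i, a i := by
  obtain ⟨V, hV⟩ := Finite.exists_ge a
  obtain ⟨W, hWV, hWb⟩ : ∃ W, W ≤ V ∧ (r + 1) * W ≤ b :=
    ⟨min V (-|b|), min_le_left _ _, by
      nlinarith [min_le_right V (-|b|), neg_abs_le b, abs_nonneg b, Nat.cast_nonneg (α := ℤ) r]⟩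
  induction b, hWb using Int.leInduction with
  | base =>
    have hgaps : {g | IsGap r a g ∧ g ≤ (r + 1) * W} = ∅ := by
      refine Set.eq_empty_of_forall_notMem fun g ⟨hg, hgW⟩ => ?_
      obtain ⟨i, m, rfl⟩ := exists_abacusEntry_eq hg.1
      rw [isGap_abacusEntry] at hg
      exact hgW.not_gt ((lt_abacusEntry_iff i W m).mpr (by linarith [hV i]))
    have hbeads : (Nat.card {v | IsBead r a v ∧ (r + 1) * W < v} : ℤ) = ∑ i, (a i + 1 - W) := by
      rw [natCard_beads_gt, Nat.cast_sum]
      exact Finset.sum_congr rfl fun i _ => Int.toNat_of_nonneg (by linarith [hV i])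
    rw [hgaps, Nat.card_coe_set_eq, Set.ncard_empty, hbeads, posRank,
      Int.mul_ediv_cancel_left _ (by positivity : ((r : ℤ) + 1) ≠ 0)]
    simp only [Finset.sum_add_distrib, Finset.sum_sub_distrib, Finset.sum_const,
      Finset.card_univ, Fintype.card_fin, nsmul_eq_mul]
    ring
  | succ b _ ih =>
    have hgaps := natCard_and_le (IsGap r a) (b + 1) (finite_gaps_lt a _)
    have hbeads := natCard_and_ge (IsBead r a) (b + 1) (finite_beads_gt a _)
    simp only [Int.lt_add_one_iff, Int.add_one_le_iff] at hgaps hbeads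
    rw [posRank_add_one, ← ite_isGap_add_ite_isBead a (b + 1)]
    push_cast [hgaps, hbeads] at ih ⊢
    linarith

end

section
variable {r : ℕ} {a : Fin r → ℤ}

lemma natCard_beads_gt_lt {b₁ b₂ : ℤ} (hb₂ : IsBead r a b₂) (h : b₁ < b₂) :
    Nat.card {v | IsBead r a v ∧ b₂ < v} < Nat.card {v | IsBead r a v ∧ b₁ < v} := by
  rw [Nat.card_coe_set_eq, Nat.card_coe_set_eq]
  refine Set.ncard_lt_ncard ?_ (finite_beads_gt a b₁)
  have hsub : {v | IsBead r a v ∧ b₂ < v} ⊆ {v | IsBead r a v ∧ b₁ < v} :=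
    fun v hv => ⟨hv.1, h.trans hv.2⟩
  rw [Set.ssubset_iff_of_subset hsub]
  exact ⟨b₂, ⟨hb₂, h⟩, fun hv => lt_irrefl _ hv.2⟩

lemma eq_of_natCard_beads_gt_eq {b₁ b₂ : ℤ} (hb₁ : IsBead r a b₁) (hb₂ : IsBead r a b₂)
    (h : Nat.card {v | IsBead r a v ∧ b₁ < v} = Nat.card {v | IsBead r a v ∧ b₂ < v}) :
    b₁ = b₂ := by
  rcases lt_trichotomy b₁ b₂ with hlt | heq | hgt
  · exact absurd h (natCard_beads_gt_lt hb₂ hlt).ne'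
  · exact heq
  · exact absurd h (natCard_beads_gt_lt hb₁ hgt).ne

lemma exists_isBead_natCard_beads_gt_eq (hr : 0 < r) (a : Fin r → ℤ) (j : ℕ) :
    ∃ b, IsBead r a b ∧ Nat.card {v | IsBead r a v ∧ b < v} = j := by
  obtain ⟨t, ht⟩ := bddAbove_setOf_isBead a
  induction j with
  | zero =>
    obtain ⟨b, hb, hmax⟩ := Int.exists_greatest_of_bdd ⟨t, fun v hv => ht hv⟩
      ⟨_, isBead_abacusEntry.mpr (le_refl (a ⟨0, hr⟩))⟩
    refine ⟨b, hb, ?_⟩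
    rw [Nat.card_coe_set_eq, Set.ncard_eq_zero (finite_beads_gt a b)]
    exact Set.eq_empty_of_forall_notMem fun v ⟨hv, hbv⟩ => (hmax v hv).not_gt hbv
  | succ j ih =>
    obtain ⟨b, hb, hj⟩ := ih
    obtain ⟨i, m, rfl⟩ := exists_abacusEntry_eq hb.emod_ne_zero
    have hlower : IsBead r a (abacusEntry r i (m - 1)) :=
      isBead_abacusEntry.mpr ((sub_le_self m zero_le_one).trans (isBead_abacusEntry.mp hb))
    obtain ⟨b', ⟨hb', hb'b⟩, hmax⟩ := Int.exists_greatest_of_bdd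
      (P := fun v => IsBead r a v ∧ v < abacusEntry r i m) ⟨abacusEntry r i m, fun v hv => hv.2.le⟩
      ⟨_, hlower, by simp only [abacusEntry]; linarith⟩
    refine ⟨b', hb', ?_⟩
    have hset : {v | IsBead r a v ∧ b' < v} = {v | IsBead r a v ∧ abacusEntry r i m ≤ v} :=
      Set.ext fun v => and_congr_right fun hv =>
        ⟨fun hlt => not_lt.mp fun hvb => (hmax v ⟨hv, hvb⟩).not_gt hlt, hb'b.trans_le⟩
    rw [hset, natCard_and_ge _ _ (finite_beads_gt a _), if_pos hb, hj]

theorem abacusCore_eq {b : ℤ} {j : ℕ} (hb : IsBead r a b)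
    (hj : Nat.card {v | IsBead r a v ∧ b < v} = j) :
    (abacusCore r a j : ℤ) = posRank r b + j - r - ∑ i, a i := by
  have hcore : abacusCore r a j = Nat.card {g | IsGap r a g ∧ g ≤ b} := by
    have hset : {g | IsGap r a g ∧ ∃ b', IsBead r a b' ∧
        Nat.card {v | IsBead r a v ∧ b' < v} = j ∧ g < b'} = {g | IsGap r a g ∧ g < b} :=
      Set.ext fun g => and_congr_right fun _ =>
        ⟨fun ⟨b', hb', hj', hgb'⟩ => eq_of_natCard_beads_gt_eq hb' hb (hj'.trans hj.symm) ▸ hgb',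
          fun hgb => ⟨b, hb, hj, hgb⟩⟩
    rw [abacusCore, hset, natCard_and_le _ _ (finite_gaps_lt a b), if_neg fun hg => hg.2 hb,
      add_zero]
  have := natCard_gaps_le_sub_natCard_beads_gt a b
  rw [hj, ← hcore] at this
  linarith

theorem abacusCore_le_abacusCore_iff {x y : Fin r → ℤ} (hsum : ∑ i, x i = ∑ i, y i) {j : ℕ}
    {bx by' : ℤ} (hbx : IsBead r x bx) (hjx : Nat.card {v | IsBead r x v ∧ bx < v} = j)
    (hby : IsBead r y by') (hjy : Nat.card {v | IsBead r y v ∧ by' < v} = j) :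
    abacusCore r y j ≤ abacusCore r x j ↔ by' ≤ bx := by
  rw [← posRank_le_posRank_iff hby.emod_ne_zero, ← Int.ofNat_le, abacusCore_eq hbx hjx,
    abacusCore_eq hby hjy, hsum]
  constructor <;> intro h <;> linarith

end

lemma BalancedAbacus.sum_eq_zero {n : ℕ} {a : Fin (2 * n) → ℤ} (h : BalancedAbacus n a) :
    ∑ i, a i = 0 := by
  have hrev : ∑ i : Fin (2 * n), a i.rev = ∑ i, a i := Equiv.sum_comp Fin.revPerm a
  have := Finset.sum_eq_zero (s := Finset.univ) fun i _ => h i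
  rw [Finset.sum_add_distrib, hrev] at this
  linarith

/-- For balanced flush abaci `x, y` on `2n` runners, `x ≥ y` in strong Bruhat order (i.e.
the core of `x` contains the core of `y`) iff for every `j`, the `j`-th highest bead of `x`
is at least as high in reading order as the `j`-th highest bead of `y`. -/
theorem stmt14 (n : ℕ) (hn : 1 ≤ n) (x y : Fin (2*n) → ℤ)
    (hbx : BalancedAbacus n x) (hby : BalancedAbacus n y) :
    (∀ i, abacusCore (2*n) y i ≤ abacusCore (2*n) x i) ↔
      ∀ (j : ℕ) (bx by' : ℤ),
        IsBead (2*n) x bx → Nat.card {b : ℤ | IsBead (2*n) x b ∧ bx < b} = j →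
        IsBead (2*n) y by' → Nat.card {b : ℤ | IsBead (2*n) y b ∧ by' < b} = j →
        by' ≤ bx := by
  have hsum : ∑ i, x i = ∑ i, y i := by rw [hbx.sum_eq_zero, hby.sum_eq_zero]
  constructor
  · intro hcore j bx by' hx hjx hy hjy
    exact (abacusCore_le_abacusCore_iff hsum hx hjx hy hjy).mp (hcore j)
  · intro h j
    obtain ⟨bx, hx, hjx⟩ := exists_isBead_natCard_beads_gt_eq (by omega) x j
    obtain ⟨by', hy, hjy⟩ := exists_isBead_natCard_beads_gt_eq (by omega) y j
    exact (abacusCore_le_abacusCore_iff hsum hx hjx hy hjy).mpr (h j bx by' hx hjx hy hjy)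
end

section
/- Let x, y be elements of the type C_n parabolic quotient whose symmetric (2n)-cores both have first part equal to k. Then x ≥ y in strong Bruhat order if and only if Φ_n(x) ≥ Φ_n(y) in strong Bruhat order on the type C_{n−1} parabolic quotient. -/
/-! Partitions and cores, represented by their row-length functions `ℕ → ℕ` (0-indexed rows). -/

/-- The length of column `j` (the conjugate partition). -/
noncomputable def colLen (f : ℕ → ℕ) (j : ℕ) : ℕ := Nat.card {i : ℕ | j < f i}

/-- `f` is a partition: weakly decreasing and eventually zero. -/
def IsPartition (f : ℕ → ℕ) : Prop := Antitone f ∧ ∃ N, ∀ i, N ≤ i → f i = 0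

/-- Hook length of the box `(i, j)` (0-indexed). -/
noncomputable def hook (f : ℕ → ℕ) (i j : ℕ) : ℕ := (f i - j) + (colLen f j - i) - 1

/-- `f` is an `m`-core: no hook length of a box of `f` is divisible by `m`. -/
def IsCore (m : ℕ) (f : ℕ → ℕ) : Prop := ∀ i j, j < f i → ¬ (m ∣ hook f i j)

/-- `f` is symmetric: it equals its conjugate. -/
def IsSymmetric (f : ℕ → ℕ) : Prop := ∀ j, colLen f j = f j

/-- Residue (mod `2n`) of the last box of row `i`, namely `j - i` for `j = f i - 1`. -/
noncomputable def rowRes (n : ℕ) (f : ℕ → ℕ) (i : ℕ) : ZMod (2*n) :=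
  (((f i : ℤ) - 1 - (i : ℤ) : ℤ) : ZMod (2*n))

/-- Residue (mod `2n`) of the last box of column `j`. -/
noncomputable def colRes (n : ℕ) (f : ℕ → ℕ) (j : ℕ) : ZMod (2*n) :=
  (((j : ℤ) - ((colLen f j : ℤ) - 1) : ℤ) : ZMod (2*n))

/-- Row `i` survives: it is nonempty and does not end in the same residue as the first row. -/
noncomputable def keptRow (n : ℕ) (f : ℕ → ℕ) (i : ℕ) : Prop :=
  0 < f i ∧ rowRes n f i ≠ rowRes n f 0

/-- Column `j` survives: it is nonempty and does not end in the same residue as the first column. -/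
noncomputable def keptCol (n : ℕ) (f : ℕ → ℕ) (j : ℕ) : Prop :=
  0 < colLen f j ∧ colRes n f j ≠ colRes n f 0

/-- The map `Φₙ` on cores: delete all rows ending in the same residue (mod `2n`) as the
first row and all columns ending in the same residue as the first column.  The `i`-th row of
the result is the number of surviving columns meeting the `i`-th surviving row. -/
noncomputable def PhiCore (n : ℕ) (f : ℕ → ℕ) : ℕ → ℕ := fun i =>
  Nat.card {j : ℕ | keptRow n f (Nat.nth (keptRow n f) i) ∧ keptCol n f j ∧
    j < f (Nat.nth (keptRow n f) i)}

/-- Delete from `f` all columns ending in the same residue (mod `2n`) as the first column. -/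
noncomputable def deleteColsCore (n : ℕ) (f : ℕ → ℕ) : ℕ → ℕ := fun i =>
  Nat.card {j : ℕ | keptCol n f j ∧ j < f i}


open scoped Classical

def sI (f : ℕ → ℕ) (i : ℕ) : ℤ := (f i : ℤ) - i - 1

def Smem (f : ℕ → ℕ) (x : ℤ) : Prop := ∃ i, sI f i = x

lemma ncard_Iio (n : ℕ) : (Set.Iio n).ncard = n := by
  rw [← Finset.coe_Iio, Set.ncard_coe_finset, Nat.card_Iio]

lemma ncard_Iic (n : ℕ) : (Set.Iic n).ncard = n + 1 := by
  rw [← Finset.coe_Iic, Set.ncard_coe_finset, Nat.card_Iic]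

lemma lowerSet_eq_Iio (s : Set ℕ) (hf : s.Finite) (hl : ∀ a b : ℕ, a ≤ b → b ∈ s → a ∈ s) :
    s = Set.Iio (Nat.card s) := by
  rw [Nat.card_coe_set_eq]
  ext b
  simp only [Set.mem_Iio]
  constructor
  · intro hb
    have hsub : Set.Iic b ⊆ s := fun a ha => hl a b ha hb
    have h1 := Set.ncard_le_ncard hsub hf
    rw [ncard_Iic] at h1
    omega
  · intro hb
    by_contra hbs
    have hsub : s ⊆ Set.Iio b := by
      intro a ha
      simp only [Set.mem_Iio]
      by_contra hab
      push_neg at hab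
      exact hbs (hl b a hab ha)
    have h1 := Set.ncard_le_ncard hsub (Set.finite_Iio b)
    rw [ncard_Iio] at h1
    omega

section Basic
variable {n k : ℕ} {f : ℕ → ℕ}

lemma parts_finite (hp : IsPartition f) (j : ℕ) : {i : ℕ | j < f i}.Finite := by
  obtain ⟨N, hN⟩ := hp.2
  apply Set.Finite.subset (Set.finite_Iio N)
  intro i hi
  simp only [Set.mem_setOf_eq] at hi
  simp only [Set.mem_Iio]
  by_contra h
  push_neg at h
  have h0 : f i = 0 := hN i h
  omega

lemma lt_colLen_iff (hp : IsPartition f) {i j : ℕ} : i < colLen f j ↔ j < f i := by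
  have h := lowerSet_eq_Iio {i : ℕ | j < f i} (parts_finite hp j)
    (fun a b hab hb => lt_of_lt_of_le hb (hp.1 hab))
  constructor
  · intro hi
    have : i ∈ Set.Iio (Nat.card {i : ℕ | j < f i}) := hi
    rw [← h] at this; exact this
  · intro hj
    have : i ∈ {i : ℕ | j < f i} := hj
    rw [h] at this; exact this

lemma dual (hp : IsPartition f) (hs : IsSymmetric f) {i j : ℕ} : j < f i ↔ i < f j := by
  rw [← hs j, lt_colLen_iff hp]

lemma f_le_k (hp : IsPartition f) (h0 : f 0 = k) (i : ℕ) : f i ≤ k := h0 ▸ hp.1 (Nat.zero_le i)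

lemma pos_iff (hp : IsPartition f) (hs : IsSymmetric f) (h0 : f 0 = k) {i : ℕ} :
    0 < f i ↔ i < k := by rw [dual hp hs, h0]

lemma sI_strictAnti (hp : IsPartition f) {a b : ℕ} (h : a ≤ b) :
    ((b : ℤ) - a) ≤ sI f a - sI f b := by
  have := hp.1 h
  simp only [sI]; omega

lemma sI_lt_of_lt (hp : IsPartition f) {a b : ℕ} (h : a < b) : sI f b < sI f a := by
  have := sI_strictAnti hp h.le; omega

lemma sI_bounds (hp : IsPartition f) (hs : IsSymmetric f) (h0 : f 0 = k) {i : ℕ} (hi : i < k) :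
    -(k:ℤ) + 1 ≤ sI f i ∧ sI f i ≤ (k:ℤ) - 1 := by
  have h1 : 0 < f i := (pos_iff hp hs h0).2 hi
  have h2 : f i ≤ k := f_le_k hp h0 i
  simp only [sI]; omega

lemma sI_of_zero (hp : IsPartition f) (hs : IsSymmetric f) (h0 : f 0 = k) {i : ℕ} (hi : k ≤ i) :
    sI f i = -(i:ℤ) - 1 := by
  have : ¬ 0 < f i := by rw [pos_iff hp hs h0]; omega
  simp only [sI]; omega

lemma sI_inj (hp : IsPartition f) : Function.Injective (sI f) := by
  intro a b hab
  rcases lt_trichotomy a b with h | h | h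
  · have := sI_lt_of_lt hp h; omega
  · exact h
  · have := sI_lt_of_lt hp h; omega

end Basic


section Smem
variable {n k : ℕ} {f : ℕ → ℕ}

lemma smem_not_both (hp : IsPartition f) (hs : IsSymmetric f) (x : ℤ) :
    ¬ (Smem f x ∧ Smem f (-1 - x)) := by
  rintro ⟨⟨i, hi⟩, ⟨j, hj⟩⟩
  simp only [sI] at hi hj
  by_cases h : j < f i
  · have h2 := (dual hp hs).1 h
    omega
  · have h2 : ¬ i < f j := fun hh => h ((dual hp hs).2 hh)
    omega

lemma smem_or (hp : IsPartition f) (hs : IsSymmetric f) (h0 : f 0 = k) (x : ℤ) :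
    Smem f x ∨ Smem f (-1 - x) := by
  set s : Set ℕ := {i : ℕ | x < sI f i} with hsdef
  have hfin : s.Finite := by
    apply Set.Finite.subset (Set.finite_Iio ((k : ℤ) - x).toNat)
    intro i hi
    simp only [hsdef, Set.mem_setOf_eq] at hi
    simp only [Set.mem_Iio]
    have h1 : f i ≤ k := f_le_k hp h0 i
    simp only [sI] at hi
    omega
  have hlow : ∀ a b : ℕ, a ≤ b → b ∈ s → a ∈ s := by
    intro a b hab hb
    simp only [hsdef, Set.mem_setOf_eq] at hb ⊢
    have := sI_strictAnti hp hab
    omega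
  have hIio := lowerSet_eq_Iio s hfin hlow
  set i₀ := Nat.card s with hi₀
  have hmem : ∀ i : ℕ, x < sI f i ↔ i < i₀ := by
    intro i
    constructor
    · intro h; have : i ∈ s := h; rw [hIio] at this; exact this
    · intro h; have : i ∈ Set.Iio i₀ := h; rw [← hIio] at this; exact this
  by_cases hcase : sI f i₀ = x
  · exact Or.inl ⟨i₀, hcase⟩
  · have hlt : sI f i₀ < x := by
      have : ¬ x < sI f i₀ := by rw [hmem]; omega
      omega
    have hbase : -(i₀:ℤ) - 1 ≤ sI f i₀ := by simp only [sI]; omega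
    have hxpos : 0 ≤ x + i₀ := by omega
    set j : ℕ := (x + i₀).toNat with hj
    have hjz : (j : ℤ) = x + i₀ := Int.toNat_of_nonneg hxpos
    -- ∀ i, j < f i ↔ i < i₀
    have hiff : ∀ i : ℕ, j < f i ↔ i < i₀ := by
      intro i
      constructor
      · intro h
        by_contra hii
        push_neg at hii
        have h1 := sI_strictAnti hp hii
        simp only [sI] at h1 hlt ⊢
        omega
      · intro h
        have h1 : i ≤ i₀ - 1 := by omega
        have h2 := sI_strictAnti hp (show i ≤ i₀ - 1 from h1)
        have h3 : x < sI f (i₀ - 1) := (hmem (i₀-1)).2 (by omega)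
        have h4 : ((i₀:ℤ) - 1) = ((i₀ - 1 : ℕ) : ℤ) := by omega
        simp only [sI] at h2 h3 ⊢
        omega
    have hcol : colLen f j = i₀ := by
      have : {i : ℕ | j < f i} = Set.Iio i₀ := by
        ext i; simp only [Set.mem_setOf_eq, Set.mem_Iio]; exact hiff i
      rw [colLen, this, Nat.card_coe_set_eq, ncard_Iio]
    have hfj : f j = i₀ := by rw [← hs j, hcol]
    refine Or.inr ⟨j, ?_⟩
    simp only [sI, hfj]
    omega

lemma smem_iff_not (hp : IsPartition f) (hs : IsSymmetric f) (h0 : f 0 = k) (x : ℤ) :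
    Smem f x ↔ ¬ Smem f (-1 - x) := by
  constructor
  · intro h1 h2; exact smem_not_both hp hs x ⟨h1, h2⟩
  · intro h1; rcases smem_or hp hs h0 x with h | h
    · exact h
    · exact absurd h h1

lemma smem_zero (h0 : f 0 = k) : Smem f ((k:ℤ) - 1) := ⟨0, by simp [sI, h0]⟩

lemma smem_sub (hp : IsPartition f) (hs : IsSymmetric f) (h0 : f 0 = k)
    (hc : IsCore (2*n) f) {x : ℤ} (hx : Smem f x) : Smem f (x - 2*n) := by
  obtain ⟨i, hi⟩ := hx
  by_contra hno
  have h2 : Smem f (-1 - (x - 2*n)) := by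
    rcases smem_or hp hs h0 (x - 2*n) with h | h
    · exact absurd h hno
    · exact h
  obtain ⟨j, hj⟩ := h2
  -- sI f j = 2n - 1 - x,  so (f j : ℤ) = j + 2n - x
  have hfj : (f j : ℤ) = (j : ℤ) + 2*n - x := by simp only [sI] at hj; omega
  have hfi : (f i : ℤ) = x + i + 1 := by simp only [sI] at hi; omega
  -- box validity
  have hifj : i < f j := by
    by_contra hh
    push_neg at hh
    have h3 : ¬ j < f i := fun hcon => by
      have := (dual hp hs).1 hcon; omega
    have h4 : f i ≤ j := by omega
    omega
  have hjfi : j < f i := (dual hp hs).2 hifj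
  have hhook : hook f i j = 2*n := by
    have hcl : colLen f j = f j := hs j
    simp only [hook, hcl]
    have h5 : j + 1 ≤ f i := hjfi
    have h6 : i + 1 ≤ f j := hifj
    omega
  exact hc i j hjfi (by rw [hhook])

lemma smem_A (hp : IsPartition f) (hs : IsSymmetric f) (h0 : f 0 = k)
    (hc : IsCore (2*n) f) (t : ℕ) : Smem f ((k:ℤ) - 1 - t * (2*n)) := by
  induction t with
  | zero => simpa using smem_zero h0
  | succ t ih =>
      have := smem_sub (n := n) hp hs h0 hc ih
      have heq : (k:ℤ) - 1 - t * (2*n) - 2*n = (k:ℤ) - 1 - (t+1 : ℕ) * (2*n) := by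
        push_cast; ring
      rwa [heq] at this

lemma not_smem_negk (hp : IsPartition f) (hs : IsSymmetric f) (h0 : f 0 = k) :
    ¬ Smem f (-(k:ℤ)) := by
  have h1 := smem_zero (f := f) h0
  have h2 := (smem_iff_not hp hs h0 ((k:ℤ)-1)).1 h1
  intro h
  apply h2
  have : (-1 - ((k:ℤ)-1)) = -(k:ℤ) := by ring
  rwa [this]

lemma not_smem_B (hp : IsPartition f) (hs : IsSymmetric f) (h0 : f 0 = k)
    (hc : IsCore (2*n) f) (t : ℕ) : ¬ Smem f ((t:ℤ) * (2*n) - k) := by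
  induction t with
  | zero => simpa using not_smem_negk hp hs h0
  | succ t ih =>
      intro h
      apply ih
      have := smem_sub (n := n) hp hs h0 hc h
      have heq : (t+1 : ℕ) * ((2:ℤ)*n) - k - 2*n = (t:ℤ) * (2*n) - k := by push_cast; ring
      rwa [heq] at this

end Smem

section Kept
variable {n k : ℕ} {f : ℕ → ℕ}

lemma rowRes_eq_cast (i : ℕ) : rowRes n f i = ((sI f i : ℤ) : ZMod (2*n)) := by
  unfold rowRes sI
  congr 1
  ring

lemma colRes_eq_cast (hs : IsSymmetric f) (j : ℕ) :
    colRes n f j = (((-(sI f j)) : ℤ) : ZMod (2*n)) := by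
  unfold colRes sI
  rw [hs j]
  congr 1
  ring

lemma sI_zero (h0 : f 0 = k) : sI f 0 = (k:ℤ) - 1 := by simp [sI, h0]

lemma keptRow_iff (hn : 0 < n) (hp : IsPartition f) (hs : IsSymmetric f) (h0 : f 0 = k)
    {i : ℕ} : keptRow n f i ↔ (i < k ∧ ∀ t : ℕ, sI f i ≠ (k:ℤ) - 1 - t * (2*n)) := by
  unfold keptRow
  rw [pos_iff hp hs h0, rowRes_eq_cast, rowRes_eq_cast, sI_zero h0]
  constructor
  · rintro ⟨h1, h2⟩
    refine ⟨h1, fun t ht => h2 ?_⟩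
    rw [ht, ZMod.intCast_eq_intCast_iff]
    exact Int.modEq_iff_dvd.2 ⟨t, by push_cast; ring⟩
  · rintro ⟨h1, h2⟩
    refine ⟨h1, fun hres => ?_⟩
    rw [ZMod.intCast_eq_intCast_iff, Int.modEq_iff_dvd] at hres
    obtain ⟨c, hc⟩ := hres
    have hub : sI f i ≤ (k:ℤ) - 1 := by
      have := sI_strictAnti hp (Nat.zero_le i)
      rw [sI_zero h0] at this
      omega
    have hcnn : 0 ≤ c := by
      rcases le_or_gt 0 c with h | h
      · exact h
      · exfalso
        have hn1 : (1:ℤ) ≤ n := by exact_mod_cast hn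
        have hcle : c ≤ -1 := by omega
        push_cast at hc
        nlinarith
    apply h2 c.toNat
    have : (c.toNat : ℤ) = c := Int.toNat_of_nonneg hcnn
    rw [this]
    push_cast
    push_cast at hc
    linarith
    
lemma keptCol_iff_keptRow (hs : IsSymmetric f) {j : ℕ} :
    keptCol n f j ↔ keptRow n f j := by
  unfold keptCol keptRow
  rw [hs j, rowRes_eq_cast, rowRes_eq_cast, colRes_eq_cast hs, colRes_eq_cast hs]
  have hz : sI f 0 = (f 0 : ℤ) - 1 := by simp [sI]
  constructor
  · rintro ⟨h1, h2⟩
    refine ⟨h1, fun h => h2 ?_⟩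
    rw [Int.cast_neg, Int.cast_neg, h]
  · rintro ⟨h1, h2⟩
    refine ⟨h1, fun h => h2 ?_⟩
    rw [Int.cast_neg, Int.cast_neg, neg_inj] at h
    exact h

lemma not_keptRow_zero : ¬ keptRow n f 0 := fun h => h.2 rfl

lemma kept_lt_k (hp : IsPartition f) (hs : IsSymmetric f) (h0 : f 0 = k) {r : ℕ}
    (hr : keptRow n f r) : r < k := (pos_iff hp hs h0).1 hr.1

lemma kept_v_lb (hp : IsPartition f) (hs : IsSymmetric f) (h0 : f 0 = k) {r : ℕ}
    (hr : keptRow n f r) : -(k:ℤ) + 1 ≤ sI f r :=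
  (sI_bounds hp hs h0 (kept_lt_k hp hs h0 hr)).1

lemma kept_v_ub (hp : IsPartition f) (hs : IsSymmetric f) (h0 : f 0 = k) (hk : 1 ≤ k)
    {r : ℕ} (hr : keptRow n f r) : sI f r ≤ (k:ℤ) - 2 := by
  have hr0 : r ≠ 0 := fun h => not_keptRow_zero (h ▸ hr)
  have h1 : (1:ℕ) ≤ r := by omega
  have h2 := sI_strictAnti hp h1
  have h3 : f 1 ≤ k := f_le_k hp h0 1
  simp only [sI] at h2 ⊢
  push_cast at h2 ⊢
  omega

end Kept


noncomputable def Scnt (f : ℕ → ℕ) (c : ℤ) : ℕ := Nat.card {a : ℕ | c < sI f a}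
noncomputable def Nv (n : ℕ) (f : ℕ → ℕ) (c : ℤ) : ℕ :=
  Nat.card {a : ℕ | keptRow n f a ∧ c < sI f a}
noncomputable def cnt (f : ℕ → ℕ) (x y : ℤ) : ℕ :=
  Nat.card {a : ℕ | x < sI f a ∧ sI f a ≤ y}
noncomputable def DaZ (k n : ℕ) (c : ℤ) : ℕ := Nat.card {t : ℕ | c < (k:ℤ) - 1 - t * (2*n)}
noncomputable def DbZ (k n : ℕ) (c : ℤ) : ℕ := Nat.card {t : ℕ | (t:ℤ) * (2*n) < c + k}

section Count
variable {n k : ℕ} {f g : ℕ → ℕ}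

lemma scnt_finite (hp : IsPartition f) (h0 : f 0 = k) (c : ℤ) :
    {a : ℕ | c < sI f a}.Finite := by
  apply Set.Finite.subset (Set.finite_Iio ((k:ℤ) - c).toNat)
  intro a ha
  simp only [Set.mem_setOf_eq] at ha
  simp only [Set.mem_Iio]
  have h1 : f a ≤ k := f_le_k hp h0 a
  simp only [sI] at ha
  omega

lemma natCard_split (s t u : Set ℕ) (h : s = t ∪ u) (hd : Disjoint t u) (hf : s.Finite) :
    Nat.card s = Nat.card t + Nat.card u := by
  have ht : t.Finite := hf.subset (by rw [h]; exact Set.subset_union_left)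
  have hu : u.Finite := hf.subset (by rw [h]; exact Set.subset_union_right)
  rw [Nat.card_coe_set_eq, Nat.card_coe_set_eq, Nat.card_coe_set_eq, h,
    Set.ncard_union_eq hd ht hu]

lemma cnt_split (hp : IsPartition f) (h0 : f 0 = k) {x y : ℤ} (h : x ≤ y) :
    Scnt f x = cnt f x y + Scnt f y := by
  apply natCard_split _ _ _ _ _ (scnt_finite hp h0 x)
  · ext a; simp only [Set.mem_setOf_eq, Set.mem_union]; constructor
    · intro ha; by_cases hy : sI f a ≤ y
      · exact Or.inl ⟨ha, hy⟩
      · exact Or.inr (by omega)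
    · rintro (⟨h1, h2⟩ | h1) <;> omega
  · rw [Set.disjoint_left]; rintro a ⟨h1, h2⟩ h3
    simp only [Set.mem_setOf_eq] at h3; omega

lemma cnt_add (hp : IsPartition f) (h0 : f 0 = k) {x y z : ℤ} (h1 : x ≤ y) (h2 : y ≤ z) :
    cnt f x z = cnt f x y + cnt f y z := by
  apply natCard_split _ _ _ _ _
    (Set.Finite.subset (scnt_finite hp h0 x) (fun a ha => ha.1))
  · ext a; simp only [Set.mem_setOf_eq, Set.mem_union]; constructor
    · intro ha; by_cases hy : sI f a ≤ y
      · exact Or.inl ⟨ha.1, hy⟩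
      · exact Or.inr ⟨by omega, ha.2⟩
    · rintro (⟨ha, hb⟩ | ⟨ha, hb⟩) <;> constructor <;> omega
  · rw [Set.disjoint_left]; rintro a ⟨h3, h4⟩ h5
    simp only [Set.mem_setOf_eq] at h5; omega

lemma nv_split (hn : 0 < n) (hp : IsPartition f) (hs : IsSymmetric f) (h0 : f 0 = k)
    (hc : IsCore (2*n) f) {c : ℤ} (h : -(k:ℤ) ≤ c) :
    Scnt f c = Nv n f c + DaZ k n c := by
  have hsplit : Scnt f c = Nv n f c + Nat.card {a : ℕ | ¬ keptRow n f a ∧ c < sI f a} := by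
    apply natCard_split _ _ _ _ _ (scnt_finite hp h0 c)
    · ext a; simp only [Set.mem_setOf_eq, Set.mem_union]; by_cases hk : keptRow n f a
      · constructor
        · intro ha; exact Or.inl ⟨hk, ha⟩
        · rintro (⟨_, h2⟩ | ⟨h1, h2⟩) <;> [exact h2; exact h2]
      · constructor
        · intro ha; exact Or.inr ⟨hk, ha⟩
        · rintro (⟨h1, h2⟩ | ⟨h1, h2⟩) <;> [exact absurd h1 hk; exact h2]
    · rw [Set.disjoint_left]; rintro a ⟨h1, _⟩ h3
      exact h3.1 h1
  rw [hsplit]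
  congr 1
  -- bijection via values
  have him1 : sI f '' {a : ℕ | ¬ keptRow n f a ∧ c < sI f a}
      = {z : ℤ | (∃ t : ℕ, z = (k:ℤ) - 1 - t * (2*n)) ∧ c < z} := by
    ext z
    simp only [Set.mem_image, Set.mem_setOf_eq]
    constructor
    · rintro ⟨a, ⟨hna, hca⟩, rfl⟩
      refine ⟨?_, hca⟩
      have hak : a < k := by
        by_contra hak
        push_neg at hak
        have := sI_of_zero hp hs h0 hak
        omega
      rw [keptRow_iff hn hp hs h0] at hna
      push_neg at hna
      obtain ⟨t, ht⟩ := hna hak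
      exact ⟨t, ht⟩
    · rintro ⟨⟨t, rfl⟩, hcz⟩
      obtain ⟨a, ha⟩ := smem_A (n := n) hp hs h0 hc t
      refine ⟨a, ⟨?_, by omega⟩, ha⟩
      rw [keptRow_iff hn hp hs h0]
      push_neg
      intro hak
      exact ⟨t, ha⟩
  have him2 : (fun t : ℕ => (k:ℤ) - 1 - t * (2*n)) '' {t : ℕ | c < (k:ℤ) - 1 - t * (2*n)}
      = {z : ℤ | (∃ t : ℕ, z = (k:ℤ) - 1 - t * (2*n)) ∧ c < z} := by
    ext z
    simp only [Set.mem_image, Set.mem_setOf_eq]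
    constructor
    · rintro ⟨t, ht, rfl⟩; exact ⟨⟨t, rfl⟩, ht⟩
    · rintro ⟨⟨t, rfl⟩, hcz⟩; exact ⟨t, hcz, rfl⟩
  have hinj2 : Function.Injective (fun t : ℕ => (k:ℤ) - 1 - t * (2*n)) := by
    intro a b hab
    simp only at hab
    have hn1 : (1:ℤ) ≤ n := by exact_mod_cast hn
    have : (a:ℤ) = b := by nlinarith
    exact_mod_cast this
  unfold DaZ
  rw [Nat.card_coe_set_eq, Nat.card_coe_set_eq,
    ← Set.ncard_image_of_injective _ (sI_inj hp), him1, ← him2,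
    Set.ncard_image_of_injective _ hinj2]

lemma scnt_low (hp : IsPartition f) (hs : IsSymmetric f) (h0 : f 0 = k) {c : ℤ}
    (h : c < -(k:ℤ)) : {a : ℕ | c < sI f a} = {a : ℕ | (a:ℤ) < -c - 1} := by
  ext a
  simp only [Set.mem_setOf_eq]
  by_cases hak : a < k
  · have := sI_bounds hp hs h0 hak
    constructor <;> intro <;> omega
  · push_neg at hak
    have := sI_of_zero hp hs h0 hak
    omega

lemma scnt_negk (hp : IsPartition f) (hs : IsSymmetric f) (h0 : f 0 = k) :
    Scnt f (-(k:ℤ)) = k := by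
  have hset : {a : ℕ | -(k:ℤ) < sI f a} = Set.Iio k := by
    ext a
    simp only [Set.mem_setOf_eq, Set.mem_Iio]
    by_cases hak : a < k
    · have := sI_bounds hp hs h0 hak
      constructor <;> intro <;> omega
    · push_neg at hak
      have := sI_of_zero hp hs h0 hak
      constructor <;> intro <;> omega
  rw [Scnt, hset, Nat.card_coe_set_eq, ncard_Iio]

lemma nv_negk (hp : IsPartition f) (hs : IsSymmetric f) (h0 : f 0 = k) {c : ℤ}
    (hck : c ≤ -(k:ℤ)) : Nv n f c = Nat.card {a : ℕ | keptRow n f a} := by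
  have hset : {a : ℕ | keptRow n f a ∧ c < sI f a} = {a : ℕ | keptRow n f a} := by
    ext a
    simp only [Set.mem_setOf_eq, and_iff_left_iff_imp]
    intro ha
    have := kept_v_lb hp hs h0 ha
    omega
  rw [Nv, hset]

lemma kept_finite (hp : IsPartition f) (hs : IsSymmetric f) (h0 : f 0 = k) :
    {a : ℕ | keptRow n f a}.Finite := by
  apply Set.Finite.subset (Set.finite_Iio k)
  intro a ha
  simp only [Set.mem_setOf_eq] at ha
  simp only [Set.mem_Iio]
  exact kept_lt_k hp hs h0 ha

lemma K_split (hn : 0 < n) (hp : IsPartition f) (hs : IsSymmetric f) (h0 : f 0 = k)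
    (hc : IsCore (2*n) f) :
    Nat.card {a : ℕ | keptRow n f a} + DaZ k n (-(k:ℤ)) = k := by
  have h1 := nv_split hn hp hs h0 hc (le_refl (-(k:ℤ)))
  rw [scnt_negk hp hs h0, nv_negk hp hs h0 (le_refl _)] at h1
  omega

end Count


section Contain
variable {n k : ℕ} {f g : ℕ → ℕ}

lemma scnt_mono (hpf : IsPartition f) (h0f : f 0 = k)
    (hle : ∀ i, g i ≤ f i) (c : ℤ) : Scnt g c ≤ Scnt f c := by
  unfold Scnt
  rw [Nat.card_coe_set_eq, Nat.card_coe_set_eq]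
  apply Set.ncard_le_ncard _ (scnt_finite hpf h0f c)
  intro a ha
  simp only [Set.mem_setOf_eq, sI] at ha ⊢
  have := hle a
  omega

lemma contain_of_scnt (hpf : IsPartition f) (hpg : IsPartition g) (h0g : g 0 = k)
    (h : ∀ c : ℤ, Scnt g c ≤ Scnt f c) : ∀ i, g i ≤ f i := by
  intro i
  by_contra hfg
  push_neg at hfg
  set c := sI f i with hc
  have h1 : Set.Iic i ⊆ {a : ℕ | c < sI g a} := by
    intro a ha
    simp only [Set.mem_Iic] at ha
    simp only [Set.mem_setOf_eq, hc, sI]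
    have := hpg.1 ha
    omega
  have h2 : {a : ℕ | c < sI f a} ⊆ Set.Iio i := by
    intro a ha
    simp only [Set.mem_setOf_eq] at ha
    simp only [Set.mem_Iio]
    by_contra hh
    push_neg at hh
    have := sI_strictAnti hpf hh
    omega
  have h3 : i + 1 ≤ Scnt g c := by
    have := Set.ncard_le_ncard h1 (scnt_finite hpg h0g c)
    rw [ncard_Iic] at this
    rw [Scnt, Nat.card_coe_set_eq]
    omega
  have h4 : Scnt f c ≤ i := by
    have := Set.ncard_le_ncard h2 (Set.finite_Iio i)
    rw [ncard_Iio] at this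
    rw [Scnt, Nat.card_coe_set_eq]
    omega
  have := h c
  omega

lemma contain_iff_nv (hn : 0 < n)
    (hpf : IsPartition f) (hsf : IsSymmetric f) (h0f : f 0 = k) (hcf : IsCore (2*n) f)
    (hpg : IsPartition g) (hsg : IsSymmetric g) (h0g : g 0 = k) (hcg : IsCore (2*n) g) :
    (∀ i, g i ≤ f i) ↔ ∀ c : ℤ, -(k:ℤ) ≤ c → Nv n g c ≤ Nv n f c := by
  constructor
  · intro hle c hck
    have h1 := nv_split hn hpf hsf h0f hcf hck
    have h2 := nv_split hn hpg hsg h0g hcg hck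
    have h3 := scnt_mono hpf h0f hle c
    omega
  · intro hnv
    apply contain_of_scnt hpf hpg h0g
    intro c
    rcases le_or_gt (-(k:ℤ)) c with h | h
    · have h1 := nv_split hn hpf hsf h0f hcf h
      have h2 := nv_split hn hpg hsg h0g hcg h
      have h3 := hnv c h
      omega
    · unfold Scnt
      rw [scnt_low hpf hsf h0f h, scnt_low hpg hsg h0g h]

end Contain

section Nth
variable {n k : ℕ} {f g : ℕ → ℕ}

lemma kept_card_eq (hpf : IsPartition f) (hsf : IsSymmetric f) (h0f : f 0 = k) :
    (kept_finite hpf hsf h0f (n := n)).toFinset.card = Nat.card {a : ℕ | keptRow n f a} :=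
  (Nat.card_eq_card_finite_toFinset _).symm

lemma nth_kept (hpf : IsPartition f) (hsf : IsSymmetric f) (h0f : f 0 = k) {i : ℕ}
    (hi : i < Nat.card {a : ℕ | keptRow n f a}) : keptRow n f (Nat.nth (keptRow n f) i) :=
  Nat.nth_mem_of_lt_card (kept_finite hpf hsf h0f) (by rw [kept_card_eq hpf hsf h0f]; exact hi)

lemma nth_zero_of_ge (hpf : IsPartition f) (hsf : IsSymmetric f) (h0f : f 0 = k) {i : ℕ}
    (hi : Nat.card {a : ℕ | keptRow n f a} ≤ i) : Nat.nth (keptRow n f) i = 0 := by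
  apply Nat.nth_eq_zero.mpr
  exact Or.inr ⟨kept_finite hpf hsf h0f, by rw [kept_card_eq hpf hsf h0f]; exact hi⟩

lemma count_eq_natCard (p : ℕ → Prop) [DecidablePred p] (r : ℕ) :
    Nat.count p r = Nat.card {a : ℕ | p a ∧ a < r} := by
  rw [Nat.count_eq_card_filter_range]
  have hset : {a : ℕ | p a ∧ a < r} = ↑((Finset.range r).filter p) := by
    ext a
    simp only [Set.mem_setOf_eq, Finset.coe_filter, Finset.mem_range]
    tauto
  rw [hset, Nat.card_coe_set_eq, Set.ncard_coe_finset]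

lemma nv_vI (hpf : IsPartition f) (hsf : IsSymmetric f) (h0f : f 0 = k) {i : ℕ}
    (hi : i < Nat.card {a : ℕ | keptRow n f a}) :
    Nv n f (sI f (Nat.nth (keptRow n f) i)) = i := by
  set r := Nat.nth (keptRow n f) i with hr
  have hset : {a : ℕ | keptRow n f a ∧ sI f r < sI f a}
      = {a : ℕ | keptRow n f a ∧ a < r} := by
    ext a
    simp only [Set.mem_setOf_eq, and_congr_right_iff]
    intro _
    constructor
    · intro h
      by_contra hh
      push_neg at hh
      have := sI_strictAnti hpf hh
      omega
    · intro h
      exact sI_lt_of_lt hpf h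
  rw [Nv, hset, ← count_eq_natCard]
  exact Nat.count_nth (fun hf => by
    rw [(by congr : hf.toFinset.card = (kept_finite hpf hsf h0f (n := n)).toFinset.card),
      kept_card_eq hpf hsf h0f]; exact hi)

lemma nth_injOn (hpf : IsPartition f) (hsf : IsSymmetric f) (h0f : f 0 = k) :
    Set.InjOn (Nat.nth (keptRow n f)) (Set.Iio (Nat.card {a : ℕ | keptRow n f a})) := by
  intro a ha b hb hab
  simp only [Set.mem_Iio] at ha hb
  by_contra hne
  have heta : Nat.nth (fun a => keptRow n f a) = Nat.nth (keptRow n f) := rfl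
  rcases lt_or_gt_of_ne hne with h | h
  · have h2 := Nat.nth_lt_nth_of_lt_card (kept_finite hpf hsf h0f) h
      (by rw [kept_card_eq hpf hsf h0f]; exact hb)
    rw [heta] at h2
    omega
  · have h2 := Nat.nth_lt_nth_of_lt_card (kept_finite hpf hsf h0f) h
      (by rw [kept_card_eq hpf hsf h0f]; exact ha)
    rw [heta] at h2
    omega

lemma nv_eq_nth_count (hpf : IsPartition f) (hsf : IsSymmetric f) (h0f : f 0 = k) (c : ℤ) :
    Nv n f c = Nat.card {i : ℕ | i < Nat.card {a : ℕ | keptRow n f a}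
      ∧ c < sI f (Nat.nth (keptRow n f) i)} := by
  set K := Nat.card {a : ℕ | keptRow n f a} with hK
  have him : (Nat.nth (keptRow n f)) '' {i : ℕ | i < K ∧ c < sI f (Nat.nth (keptRow n f) i)}
      = {a : ℕ | keptRow n f a ∧ c < sI f a} := by
    ext a
    simp only [Set.mem_image, Set.mem_setOf_eq]
    constructor
    · rintro ⟨i, ⟨hi, hci⟩, rfl⟩
      exact ⟨nth_kept hpf hsf h0f hi, hci⟩
    · rintro ⟨ha, hca⟩
      classical
      refine ⟨Nat.count (keptRow n f) a, ⟨?_, ?_⟩, ?_⟩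
      · rw [hK, ← kept_card_eq hpf hsf h0f]
        exact Nat.count_lt_card _ ha
      · rw [Nat.nth_count ha]; exact hca
      · rw [Nat.nth_count ha]
  rw [Nv, ← him, Nat.card_coe_set_eq, Nat.card_coe_set_eq,
    Set.ncard_image_of_injOn (Set.InjOn.mono (fun x hx => by
      simp only [Set.mem_setOf_eq] at hx; exact Set.mem_Iio.mpr hx.1) (nth_injOn hpf hsf h0f))]

end Nth


section CntTools
variable {n k : ℕ} {f : ℕ → ℕ}

lemma cnt_eq_filter (hp : IsPartition f) (x y : ℤ) :
    cnt f x y = ((Finset.Icc (x+1) y).filter (fun z => Smem f z)).card := by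
  have him : sI f '' {a : ℕ | x < sI f a ∧ sI f a ≤ y}
      = ↑((Finset.Icc (x+1) y).filter (fun z => Smem f z)) := by
    ext z
    simp only [Set.mem_image, Set.mem_setOf_eq, Finset.coe_filter, Finset.mem_Icc]
    constructor
    · rintro ⟨a, ⟨h1, h2⟩, rfl⟩
      exact ⟨⟨by omega, h2⟩, ⟨a, rfl⟩⟩
    · rintro ⟨⟨h1, h2⟩, ⟨a, rfl⟩⟩
      exact ⟨a, ⟨by omega, h2⟩, rfl⟩
  rw [cnt, Nat.card_coe_set_eq, ← Set.ncard_image_of_injective _ (sI_inj hp), him,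
    Set.ncard_coe_finset]

lemma card_Icc_int (x y : ℤ) (h : x ≤ y) : ((Finset.Icc (x+1) y).card : ℤ) = y - x := by
  rw [Int.card_Icc]
  omega

lemma cnt_le (hp : IsPartition f) {x y : ℤ} (h : x ≤ y) : (cnt f x y : ℤ) ≤ y - x := by
  rw [cnt_eq_filter hp]
  have h1 := Finset.card_filter_le (Finset.Icc (x+1) y) (fun z => Smem f z)
  have h2 := card_Icc_int x y h
  omega

lemma cnt_pos (hp : IsPartition f) {x y z : ℤ} (hz : Smem f z) (h1 : x < z) (h2 : z ≤ y) :
    1 ≤ cnt f x y := by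
  rw [cnt_eq_filter hp]
  have : (Finset.filter (fun z => Smem f z) (Finset.Icc (x + 1) y)).Nonempty :=
    ⟨z, Finset.mem_filter.mpr ⟨Finset.mem_Icc.mpr ⟨by omega, h2⟩, hz⟩⟩
  exact Finset.card_pos.mpr this

lemma cnt_miss (hp : IsPartition f) {x y z : ℤ} (hz : ¬ Smem f z) (h1 : x < z) (h2 : z ≤ y) :
    (cnt f x y : ℤ) ≤ y - x - 1 := by
  rw [cnt_eq_filter hp]
  have hsub : (Finset.Icc (x+1) y).filter (fun z => Smem f z)
      ⊆ (Finset.Icc (x+1) y).erase z := by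
    intro w hw
    rw [Finset.mem_filter] at hw
    rw [Finset.mem_erase]
    refine ⟨fun hwz => hz (hwz ▸ hw.2), hw.1⟩
  have h3 := Finset.card_le_card hsub
  have h4 := Finset.card_erase_of_mem (Finset.mem_Icc.mpr ⟨by omega, h2⟩ :
    z ∈ Finset.Icc (x+1) y)
  have h5 := card_Icc_int x y (by omega)
  have h6 : 1 ≤ (Finset.Icc (x+1) y).card := Finset.card_pos.mpr
    ⟨z, Finset.mem_Icc.mpr ⟨by omega, h2⟩⟩
  omega

lemma cnt_reflect (hp : IsPartition f) (hs : IsSymmetric f) (h0 : f 0 = k) {x y : ℤ}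
    (h : x ≤ y) : (cnt f x y : ℤ) + cnt f (-2-y) (-2-x) = y - x := by
  rw [cnt_eq_filter hp, cnt_eq_filter hp]
  have hre : (-2-y) + 1 = -1-y := by ring
  rw [hre]
  -- second filter = image of not-filter under z ↦ -1-z
  have himg : (Finset.Icc (-1-y) (-2-x)).filter (fun z => Smem f z)
      = ((Finset.Icc (x+1) y).filter (fun z => ¬ Smem f z)).image (fun z => -1-z) := by
    ext w
    simp only [Finset.mem_filter, Finset.mem_image, Finset.mem_Icc]
    constructor
    · rintro ⟨⟨hw1, hw2⟩, hw3⟩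
      refine ⟨-1-w, ⟨⟨by omega, by omega⟩, ?_⟩, by ring⟩
      intro hmem
      exact smem_not_both hp hs (-1-w) ⟨hmem, by rw [(by ring : -1 - (-1-w) = w)]; exact hw3⟩
    · rintro ⟨z, ⟨⟨hz1, hz2⟩, hz3⟩, rfl⟩
      refine ⟨⟨by omega, by omega⟩, ?_⟩
      rcases smem_or hp hs h0 z with hz | hz
      · exact absurd hz hz3
      · exact hz
  rw [himg, Finset.card_image_of_injective _ (fun a b hab => by omega)]
  have hsum := Finset.card_filter_add_card_filter_not
    (s := Finset.Icc (x+1) y) (p := fun z => Smem f z)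
  have hcard := card_Icc_int x y h
  omega

lemma cnt_sym (hp : IsPartition f) (hs : IsSymmetric f) (h0 : f 0 = k) {x : ℤ}
    (h : x ≤ -1) : (cnt f x (-2-x) : ℤ) = -1-x := by
  have h1 := cnt_reflect hp hs h0 (show x ≤ -2-x by omega)
  rw [(by ring : -2-(-2-x) = x)] at h1
  omega

end CntTools


section Meet
variable {n k : ℕ} {f : ℕ → ℕ}

lemma scnt_sI (hp : IsPartition f) (r : ℕ) : Scnt f (sI f r) = r := by
  have hset : {a : ℕ | sI f r < sI f a} = Set.Iio r := by
    ext a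
    simp only [Set.mem_setOf_eq, Set.mem_Iio]
    constructor
    · intro h
      by_contra hh
      push_neg at hh
      have := sI_strictAnti hp hh
      omega
    · intro h
      exact sI_lt_of_lt hp h
  rw [Scnt, hset, Nat.card_coe_set_eq, ncard_Iio]

lemma meet_iff (hn : 0 < n) (hp : IsPartition f) (hs : IsSymmetric f) (h0 : f 0 = k)
    (hc : IsCore (2*n) f) {r j t : ℕ} (hr : keptRow n f r)
    (hj : sI f j = (k:ℤ) - 1 - t*(2*n)) :
    (j < f r) ↔ ((t:ℤ) * (2*n) < sI f r + k) := by
  set v := sI f r with hv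
  set u := (t:ℤ) * (2*n) with hu
  set c := (k:ℤ) - 1 - u with hcdef
  have hSmemv : Smem f v := ⟨r, rfl⟩
  have hSmemc : Smem f c := ⟨j, hj⟩
  have hvnec : v ≠ c := by
    have := ((keptRow_iff hn hp hs h0).1 hr).2 t
    rw [← hv, ← hu] at this
    exact this
  have hvneB : v ≠ u - k := by
    intro hh
    exact not_smem_B hp hs h0 hc t (by rw [← hu, ← hh]; exact hSmemv)
  have hnsmem : ¬ Smem f (-1 - v) := by
    intro hh
    exact smem_not_both hp hs v ⟨hSmemv, hh⟩
  have h1 : Scnt f v = r := scnt_sI hp r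
  have h2 : Scnt f c = j := by rw [← hj]; exact scnt_sI hp j
  have hmain : ((Scnt f v : ℤ) < c + (Scnt f c : ℤ) + 1) ↔ (u < v + k) := by
    rcases lt_or_gt_of_ne hvnec with hvc | hcv
    · -- v < c
      have hsplit := cnt_split hp h0 (le_of_lt hvc) (y := c)
      constructor
      · intro hlt
        -- cnt f v c ≤ c ; conclude -c ≤ v i.e. u < v + k (u - k < v)
        by_contra hcon
        push_neg at hcon   -- v + k ≤ u i.e. v ≤ u - k = -1-c; with v ≠ u-k: v ≤ -2-c
        have hvle : v ≤ -2 - c := by omega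
        have hv1 : v ≤ -1 := by omega
        have hadd := cnt_add hp h0 (le_of_lt hvc) (show c ≤ -2-v by omega)
        have hsym := cnt_sym hp hs h0 hv1
        have hle2 := cnt_le hp (show c ≤ -2-v by omega)
        omega
      · intro hineq
        -- -c ≤ v; show cnt f v c ≤ c
        have hcge : -c ≤ v := by omega
        rcases le_or_gt 0 v with hv0 | hv0
        · have := cnt_le hp (le_of_lt hvc)
          omega
        · have hv1 : v ≤ -1 := by omega
          have hadd := cnt_add hp h0 (show v ≤ -2-v by omega) (show -2-v ≤ c by omega)
          have hsym := cnt_sym hp hs h0 hv1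
          have hmiss := cnt_miss hp hnsmem (show -2-v < -1-v by omega)
            (show -1-v ≤ c by omega)
          omega
    · -- c < v
      have hsplit := cnt_split hp h0 (le_of_lt hcv) (y := v)
      constructor
      · intro hlt
        by_contra hcon
        push_neg at hcon
        have hvle : v ≤ -2 - c := by omega
        have hc1 : c ≤ -1 := by omega
        have hadd := cnt_add hp h0 (le_of_lt hcv) (show v ≤ -2-c by omega)
        have hsym := cnt_sym hp hs h0 hc1
        omega
      · intro hineq
        have hcge : -1 - c < v := by omega
        rcases le_or_gt 0 c with hc0 | hc0
        · omega
        · have hc1 : c ≤ -1 := by omega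
          have hadd := cnt_add hp h0 (show c ≤ -2-c by omega) (show -2-c ≤ v by omega)
          have hsym := cnt_sym hp hs h0 hc1
          have hpos := cnt_pos hp hSmemv (show -2-c < v by omega) (le_refl v)
          omega
  have hfj : (f j : ℤ) = c + j + 1 := by
    simp only [sI] at hj
    rw [hcdef, hu]
    omega
  rw [dual hp hs]
  constructor
  · intro h
    have hh : (r : ℤ) < (f j : ℤ) := by exact_mod_cast h
    apply hmain.1
    rw [h1, h2]
    omega
  · intro h
    have hh := hmain.2 h
    rw [h1, h2] at hh
    have hrr : (r:ℤ) < (f j:ℤ) := by omega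
    exact_mod_cast hrr

end Meet


section Phi
variable {n k : ℕ} {f : ℕ → ℕ}

lemma phi_formula (hn : 0 < n) (hk : 1 ≤ k) (hp : IsPartition f) (hs : IsSymmetric f)
    (h0 : f 0 = k) (hc : IsCore (2*n) f) {i : ℕ}
    (hi : i < Nat.card {a : ℕ | keptRow n f a}) :
    (PhiCore n f i : ℤ) = (i:ℤ) + 1 + sI f (Nat.nth (keptRow n f) i)
      + (DaZ k n (sI f (Nat.nth (keptRow n f) i)) : ℤ)
      - (DbZ k n (sI f (Nat.nth (keptRow n f) i)) : ℤ) := by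
  set r := Nat.nth (keptRow n f) i with hrdef
  set v := sI f r with hv
  have hr : keptRow n f r := nth_kept hp hs h0 hi
  have hvlb : -(k:ℤ) + 1 ≤ v := kept_v_lb hp hs h0 hr
  have hvub : v ≤ (k:ℤ) - 2 := kept_v_ub hp hs h0 hk hr
  have hfrk : f r ≤ k := f_le_k hp h0 r
  -- step 1 : PhiCore = card of kept cols below f r
  have hseteq : {j : ℕ | keptRow n f r ∧ keptCol n f j ∧ j < f r}
      = {j : ℕ | keptRow n f j ∧ j < f r} := by
    ext j
    simp only [Set.mem_setOf_eq]
    rw [keptCol_iff_keptRow hs]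
    tauto
  have hstep1 : PhiCore n f i = Nat.card {j : ℕ | keptRow n f j ∧ j < f r} := by
    unfold PhiCore
    rw [← hrdef, hseteq]
  -- step 2 : split Iio (f r)
  have hIio : Nat.card {j : ℕ | j < f r} = f r := by
    rw [(by ext j; simp : {j : ℕ | j < f r} = Set.Iio (f r)), Nat.card_coe_set_eq,
      ncard_Iio]
  have hsplit : Nat.card {j : ℕ | j < f r} = Nat.card {j : ℕ | keptRow n f j ∧ j < f r}
      + Nat.card {j : ℕ | ¬ keptRow n f j ∧ j < f r} := by
    apply natCard_split _ _ _ _ _ (by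
      apply Set.Finite.subset (Set.finite_Iio (f r))
      intro a ha
      exact ha)
    · ext j
      simp only [Set.mem_setOf_eq, Set.mem_union]
      tauto
    · rw [Set.disjoint_left]
      rintro a ⟨h1, _⟩ ⟨h2, _⟩
      exact h2 h1
  -- step 3 : nonkept count equals DbZ
  have hstep3 : Nat.card {j : ℕ | ¬ keptRow n f j ∧ j < f r} = DbZ k n v := by
    have him1 : sI f '' {j : ℕ | ¬ keptRow n f j ∧ j < f r}
        = {z : ℤ | ∃ t : ℕ, z = (k:ℤ) - 1 - t * (2*n) ∧ (t:ℤ) * (2*n) < v + k} := by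
      ext z
      simp only [Set.mem_image, Set.mem_setOf_eq]
      constructor
      · rintro ⟨j, ⟨hnk, hjr⟩, rfl⟩
        have hjk : j < k := by omega
        rw [keptRow_iff hn hp hs h0] at hnk
        push_neg at hnk
        obtain ⟨t, ht⟩ := hnk hjk
        exact ⟨t, ht, (meet_iff hn hp hs h0 hc hr ht).1 hjr⟩
      · rintro ⟨t, rfl, htv⟩
        obtain ⟨a, ha⟩ := smem_A (n := n) hp hs h0 hc t
        refine ⟨a, ⟨?_, (meet_iff hn hp hs h0 hc hr ha).2 htv⟩, ha⟩
        rw [keptRow_iff hn hp hs h0]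
        push_neg
        intro hak
        exact ⟨t, ha⟩
    have him2 : (fun t : ℕ => (k:ℤ) - 1 - t * (2*n)) '' {t : ℕ | (t:ℤ) * (2*n) < v + k}
        = {z : ℤ | ∃ t : ℕ, z = (k:ℤ) - 1 - t * (2*n) ∧ (t:ℤ) * (2*n) < v + k} := by
      ext z
      simp only [Set.mem_image, Set.mem_setOf_eq]
      constructor
      · rintro ⟨t, ht, rfl⟩; exact ⟨t, rfl, ht⟩
      · rintro ⟨t, rfl, ht⟩; exact ⟨t, ht, rfl⟩
    have hinj2 : Function.Injective (fun t : ℕ => (k:ℤ) - 1 - t * (2*n)) := by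
      intro a b hab
      simp only at hab
      have hn1 : (1:ℤ) ≤ n := by exact_mod_cast hn
      have : (a:ℤ) = b := by nlinarith
      exact_mod_cast this
    rw [DbZ, Nat.card_coe_set_eq, Nat.card_coe_set_eq,
      ← Set.ncard_image_of_injective _ (sI_inj hp), him1, ← him2,
      Set.ncard_image_of_injective _ hinj2]
  -- step 5 : r = i + DaZ
  have hstep5 : r = i + DaZ k n v := by
    have h1 : Scnt f v = r := scnt_sI hp r
    have h2 := nv_split hn hp hs h0 hc (show -(k:ℤ) ≤ v by omega)
    have h3 : Nv n f v = i := nv_vI hp hs h0 hi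
    omega
  have hfr : (f r : ℤ) = v + r + 1 := by simp only [hv, sI]; omega
  have hjk : ∀ j, j < f r → j < k := fun j hj => by omega
  rw [hstep1]
  have : Nat.card {j : ℕ | keptRow n f j ∧ j < f r} = f r - DbZ k n v := by omega
  rw [this]
  have hDble : DbZ k n v ≤ f r := by omega
  push_cast [hDble]
  omega
  
lemma phi_zero (hp : IsPartition f) (hs : IsSymmetric f) (h0 : f 0 = k) {i : ℕ}
    (hi : Nat.card {a : ℕ | keptRow n f a} ≤ i) : PhiCore n f i = 0 := by
  rw [PhiCore, nth_zero_of_ge hp hs h0 hi]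
  have hset : {j : ℕ | keptRow n f 0 ∧ keptCol n f j ∧ j < f 0} = (∅ : Set ℕ) := by
    ext j
    simp only [Set.mem_setOf_eq, Set.mem_empty_iff_false, iff_false]
    rintro ⟨h1, _⟩
    exact not_keptRow_zero h1
  rw [hset, Nat.card_coe_set_eq, Set.ncard_empty]

end Phi


section Psi
variable {n k : ℕ}

lemma t_le_mul (t : ℕ) (hn : 0 < n) : (t:ℤ) ≤ (t:ℤ) * (2*n) := by
  have h1 : (1:ℤ) ≤ 2*n := by
    have : (1:ℤ) ≤ n := by exact_mod_cast hn
    omega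
  nlinarith [Int.natCast_nonneg t]

lemma daz_finite (hn : 0 < n) (v : ℤ) : {t : ℕ | v < (k:ℤ) - 1 - t * (2*n)}.Finite := by
  apply Set.Finite.subset (Set.finite_Iio ((k:ℤ) - v).toNat)
  intro t ht
  simp only [Set.mem_setOf_eq] at ht
  simp only [Set.mem_Iio]
  have := t_le_mul t hn
  omega

lemma dbz_finite (hn : 0 < n) (v : ℤ) : {t : ℕ | (t:ℤ) * (2*n) < v + k}.Finite := by
  apply Set.Finite.subset (Set.finite_Iio (v + (k:ℤ)).toNat)
  intro t ht
  simp only [Set.mem_setOf_eq] at ht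
  simp only [Set.mem_Iio]
  have := t_le_mul t hn
  omega

lemma tmap_inj (hn : 0 < n) : Function.Injective (fun t : ℕ => (k:ℤ) - 1 - t * (2*n)) := by
  intro a b hab
  simp only at hab
  have hn1 : (1:ℤ) ≤ n := by exact_mod_cast hn
  have : (a:ℤ) = b := by nlinarith
  exact_mod_cast this

lemma tmap_inj' (hn : 0 < n) : Function.Injective (fun t : ℕ => (t:ℤ) * (2*n) - k) := by
  intro a b hab
  simp only at hab
  have hn1 : (1:ℤ) ≤ n := by exact_mod_cast hn
  have : (a:ℤ) = b := by nlinarith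
  exact_mod_cast this

lemma psi_lt (hn : 0 < n) {v1 v2 : ℤ}
    (h1B : ∀ t : ℕ, v1 ≠ (t:ℤ) * (2*n) - k)
    (h2A : ∀ t : ℕ, v2 ≠ (k:ℤ) - 1 - t * (2*n))
    (hlt : v1 < v2) :
    v1 + (DaZ k n v1 : ℤ) - (DbZ k n v1 : ℤ) < v2 + (DaZ k n v2 : ℤ) - (DbZ k n v2 : ℤ) := by
  set setA : Set ℕ := {t : ℕ | v1 < (k:ℤ) - 1 - t * (2*n) ∧ (k:ℤ) - 1 - t * (2*n) ≤ v2}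
    with hsetA
  set setB : Set ℕ := {t : ℕ | v1 + k ≤ (t:ℤ) * (2*n) ∧ (t:ℤ) * (2*n) < v2 + k} with hsetB
  have hsplitA : DaZ k n v1 = Nat.card setA + DaZ k n v2 := by
    rw [DaZ, DaZ, Nat.add_comm]
    apply natCard_split _ _ _ _ _ (daz_finite hn v1)
    · ext t
      simp only [Set.mem_setOf_eq, Set.mem_union, hsetA]
      constructor
      · intro h
        by_cases h2 : v2 < (k:ℤ) - 1 - t * (2*n)
        · exact Or.inl h2
        · exact Or.inr ⟨h, by omega⟩
      · rintro (h | ⟨h, _⟩) <;> omega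
    · rw [Set.disjoint_left]
      rintro t h1 ⟨_, h3⟩
      simp only [Set.mem_setOf_eq] at h1
      omega
  have hsplitB : DbZ k n v2 = DbZ k n v1 + Nat.card setB := by
    rw [DbZ, DbZ]
    apply natCard_split _ _ _ _ _ (dbz_finite hn v2)
    · ext t
      simp only [Set.mem_setOf_eq, Set.mem_union, hsetB]
      constructor
      · intro h
        by_cases h2 : (t:ℤ) * (2*n) < v1 + k
        · exact Or.inl h2
        · exact Or.inr ⟨by omega, h⟩
      · rintro (h | ⟨h1, h2⟩) <;> omega
    · rw [Set.disjoint_left]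
      rintro t h1 ⟨h2, _⟩
      simp only [Set.mem_setOf_eq] at h1
      omega
  -- bound Nat.card setA + Nat.card setB ≤ v2 - v1 - 1
  have hAfin : setA.Finite := (daz_finite hn v1).subset (fun t ht => ht.1)
  have hBfin : setB.Finite := (dbz_finite hn v2).subset (fun t ht => ht.2)
  set imgA := (fun t : ℕ => (k:ℤ) - 1 - t * (2*n)) '' setA with himgA
  set imgB := (fun t : ℕ => (t:ℤ) * (2*n) - k) '' setB with himgB
  have hcardA : imgA.ncard = Nat.card setA := by
    rw [himgA, Set.ncard_image_of_injective _ (tmap_inj hn), Nat.card_coe_set_eq]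
  have hcardB : imgB.ncard = Nat.card setB := by
    rw [himgB, Set.ncard_image_of_injective _ (tmap_inj' hn), Nat.card_coe_set_eq]
  have hsub : imgA ∪ imgB ⊆ ↑(Finset.Icc (v1+1) (v2-1)) := by
    intro z hz
    simp only [Finset.coe_Icc, Set.mem_Icc]
    rcases hz with hz | hz
    · obtain ⟨t, ⟨ht1, ht2⟩, heq⟩ := hz
      simp only at heq
      subst heq
      have hne := h2A t
      omega
    · obtain ⟨t, ⟨ht1, ht2⟩, heq⟩ := hz
      simp only at heq
      subst heq
      have hne := h1B t
      omega
  have hdisj : Disjoint imgA imgB := by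
    rw [Set.disjoint_left]
    rintro z ⟨t, _, rfl⟩ ⟨t', _, heq⟩
    simp only at heq
    have h2 : 2*(k:ℤ) - 1 = 2*(((t:ℤ) + (t':ℤ)) * n) := by linarith [heq]
    generalize ((t:ℤ) + (t':ℤ)) * n = w at h2
    omega
  have huc : (imgA ∪ imgB).ncard = Nat.card setA + Nat.card setB := by
    rw [Set.ncard_union_eq hdisj (hAfin.image _) (hBfin.image _), hcardA, hcardB]
  have hle := Set.ncard_le_ncard hsub (Finset.finite_toSet _)
  rw [huc, Set.ncard_coe_finset, Int.card_Icc] at hle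
  have hfin : Nat.card setA + Nat.card setB ≤ (v2 - 1 + 1 - (v1+1)).toNat := hle
  have : (Nat.card setA : ℤ) + Nat.card setB ≤ v2 - v1 - 1 := by omega
  omega

end Psi

section Final
variable {n k : ℕ} {f g : ℕ → ℕ}

lemma kept_admA (hn : 0 < n) (hp : IsPartition f) (hs : IsSymmetric f) (h0 : f 0 = k)
    {r : ℕ} (hr : keptRow n f r) : ∀ t : ℕ, sI f r ≠ (k:ℤ) - 1 - t * (2*n) :=
  ((keptRow_iff hn hp hs h0).1 hr).2

lemma kept_admB (hp : IsPartition f) (hs : IsSymmetric f) (h0 : f 0 = k)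
    (hc : IsCore (2*n) f) (r : ℕ) : ∀ t : ℕ, sI f r ≠ (t:ℤ) * (2*n) - k :=
  fun t h => not_smem_B hp hs h0 hc t ⟨r, h⟩

lemma nv_fin (hp : IsPartition f) (h0 : f 0 = k) (c : ℤ) :
    {a : ℕ | keptRow n f a ∧ c < sI f a}.Finite :=
  (scnt_finite hp h0 c).subset (fun a ha => ha.2)

lemma nv_iff_vI (hn : 0 < n)
    (hpf : IsPartition f) (hsf : IsSymmetric f) (h0f : f 0 = k) (hcf : IsCore (2*n) f)
    (hpg : IsPartition g) (hsg : IsSymmetric g) (h0g : g 0 = k) (hcg : IsCore (2*n) g) :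
    (∀ c : ℤ, -(k:ℤ) ≤ c → Nv n g c ≤ Nv n f c) ↔
    (∀ i, i < Nat.card {a : ℕ | keptRow n f a} →
      sI g (Nat.nth (keptRow n g) i) ≤ sI f (Nat.nth (keptRow n f) i)) := by
  have hK : Nat.card {a : ℕ | keptRow n g a} = Nat.card {a : ℕ | keptRow n f a} := by
    have h1 := K_split hn hpf hsf h0f hcf
    have h2 := K_split hn hpg hsg h0g hcg
    omega
  constructor
  · intro hnv i hi
    by_contra hcon
    push_neg at hcon
    set c := sI f (Nat.nth (keptRow n f) i) with hc
    have hrf : keptRow n f (Nat.nth (keptRow n f) i) := nth_kept hpf hsf h0f hi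
    have hck : -(k:ℤ) ≤ c := by have := kept_v_lb hpf hsf h0f hrf; omega
    have hnvf : Nv n f c = i := nv_vI hpf hsf h0f hi
    have higK : i < Nat.card {a : ℕ | keptRow n g a} := by omega
    have hrg : keptRow n g (Nat.nth (keptRow n g) i) := nth_kept hpg hsg h0g higK
    -- count below nth g i + 1 is i+1
    have hcount : Nat.card {a : ℕ | keptRow n g a ∧ a < Nat.nth (keptRow n g) i + 1}
        = i + 1 := by
      rw [← count_eq_natCard]
      rw [Nat.count_succ]
      rw [if_pos hrg]
      have : Nat.count (keptRow n g) (Nat.nth (keptRow n g) i) = i :=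
        Nat.count_nth (fun hf => by
          rw [(by congr : hf.toFinset.card = (kept_finite hpg hsg h0g (n := n)).toFinset.card),
            kept_card_eq hpg hsg h0g]
          exact higK)
      omega
    have hsub : {a : ℕ | keptRow n g a ∧ a < Nat.nth (keptRow n g) i + 1}
        ⊆ {a : ℕ | keptRow n g a ∧ c < sI g a} := by
      rintro a ⟨ha, hlt⟩
      refine ⟨ha, ?_⟩
      have h2 := sI_strictAnti hpg (show a ≤ Nat.nth (keptRow n g) i by omega)
      omega
    have hle2 := Set.ncard_le_ncard hsub (nv_fin hpg h0g c)
    rw [← Nat.card_coe_set_eq, ← Nat.card_coe_set_eq, hcount] at hle2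
    have := hnv c hck
    rw [hnvf] at this
    have hNv : Nv n g c = Nat.card {a : ℕ | keptRow n g a ∧ c < sI g a} := rfl
    omega
  · intro hvi c hck
    rw [nv_eq_nth_count hpf hsf h0f c, nv_eq_nth_count hpg hsg h0g c, hK]
    rw [Nat.card_coe_set_eq, Nat.card_coe_set_eq]
    apply Set.ncard_le_ncard
    · rintro i ⟨hi, hci⟩
      refine ⟨hi, ?_⟩
      have := hvi i hi
      omega
    · apply Set.Finite.subset (Set.finite_Iio (Nat.card {a : ℕ | keptRow n f a}))
      rintro i ⟨hi, _⟩
      exact hi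

end Final

/-- For symmetric `2n`-cores `f, g` with first part `k`, `f ≥ g` in strong Bruhat order
(containment of cores) iff `Φₙ(f) ≥ Φₙ(g)`. -/
theorem stmt15 (n k : ℕ) (hn : 2 ≤ n) (hk : 1 ≤ k) (f g : ℕ → ℕ)
    (hfp : IsPartition f) (hfc : IsCore (2*n) f) (hfs : IsSymmetric f) (hf0 : f 0 = k)
    (hgp : IsPartition g) (hgc : IsCore (2*n) g) (hgs : IsSymmetric g) (hg0 : g 0 = k) :
    (∀ i, g i ≤ f i) ↔ (∀ i, PhiCore n g i ≤ PhiCore n f i) := by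
  have hn0 : 0 < n := by omega
  have hK : Nat.card {a : ℕ | keptRow n g a} = Nat.card {a : ℕ | keptRow n f a} := by
    have h1 := K_split hn0 hfp hfs hf0 hfc
    have h2 := K_split hn0 hgp hgs hg0 hgc
    omega
  rw [contain_iff_nv hn0 hfp hfs hf0 hfc hgp hgs hg0 hgc,
      nv_iff_vI hn0 hfp hfs hf0 hfc hgp hgs hg0 hgc]
  constructor
  · intro hv i
    rcases lt_or_ge i (Nat.card {a : ℕ | keptRow n f a}) with hi | hi
    · have higK : i < Nat.card {a : ℕ | keptRow n g a} := by omega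
      have hf1 := phi_formula hn0 hk hfp hfs hf0 hfc hi
      have hg1 := phi_formula hn0 hk hgp hgs hg0 hgc higK
      have hle := hv i hi
      have hrf : keptRow n f (Nat.nth (keptRow n f) i) := nth_kept hfp hfs hf0 hi
      have hrg : keptRow n g (Nat.nth (keptRow n g) i) := nth_kept hgp hgs hg0 higK
      rcases eq_or_lt_of_le hle with heq | hlt2
      · have hcast : (PhiCore n g i : ℤ) = (PhiCore n f i : ℤ) := by
          rw [hf1, hg1, heq]
        exact_mod_cast hcast.le
      · have hps := psi_lt hn0 (kept_admB hgp hgs hg0 hgc _)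
          (kept_admA hn0 hfp hfs hf0 hrf) hlt2
        have hcast : (PhiCore n g i : ℤ) ≤ (PhiCore n f i : ℤ) := by
          rw [hf1, hg1]
          omega
        exact_mod_cast hcast
    · rw [phi_zero hgp hgs hg0 (by omega)]
      exact Nat.zero_le _
  · intro hphi i hi
    by_contra hcon
    push_neg at hcon
    have higK : i < Nat.card {a : ℕ | keptRow n g a} := by omega
    have hf1 := phi_formula hn0 hk hfp hfs hf0 hfc hi
    have hg1 := phi_formula hn0 hk hgp hgs hg0 hgc higK
    have hrg : keptRow n g (Nat.nth (keptRow n g) i) := nth_kept hgp hgs hg0 higK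
    have hps := psi_lt hn0 (kept_admB hfp hfs hf0 hfc _)
      (kept_admA hn0 hgp hgs hg0 hrg) hcon
    have h2 := hphi i
    have hcast : (PhiCore n f i : ℤ) < (PhiCore n g i : ℤ) := by
      rw [hf1, hg1]
      omega
    have : PhiCore n f i < PhiCore n g i := by exact_mod_cast hcast
    omega
end

section
/- Under the projection π onto the hyperplane H = {v ∈ ℝ^n : ⟨v,ε_ℓ⟩ = ⌈k/(2n)⌉} (identified with ℝ^{n−1}), the image of any distinguished alcove of the type C_n arrangement whose coroot lattice point lies on H and corresponds to a symmetric (2n)-core with first part k is a distinguished alcove of the type C_{n−1} arrangement. -/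
/-! The affine hyperplane arrangement of type `Cₙ` in `ℝⁿ = Fin n → ℝ`. -/

noncomputable def dotp (n : ℕ) (x y : Fin n → ℝ) : ℝ := ∑ i, x i * y i

def stdBasis (n : ℕ) (i : Fin n) : Fin n → ℝ := fun j => if j = i then 1 else 0

/-- The positive roots of type `Cₙ`: `2εᵢ` and `εᵢ ± εⱼ` for `i < j`. -/
def PosRoot (n : ℕ) : Set (Fin n → ℝ) :=
  {α | (∃ i, α = (2 : ℝ) • stdBasis n i) ∨
       (∃ i j : Fin n, i < j ∧ (α = stdBasis n i + stdBasis n j ∨ α = stdBasis n i - stdBasis n j))}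

/-- The complement of the affine arrangement `{x : (x, α) = m}`, `α` a positive root, `m ∈ ℤ`. -/
def ArrComp (n : ℕ) : Set (Fin n → ℝ) :=
  {x | ∀ α ∈ PosRoot n, ∀ m : ℤ, dotp n x α ≠ (m : ℝ)}

/-- An alcove is a connected component of the complement of the arrangement. -/
def IsAlcove (n : ℕ) (A : Set (Fin n → ℝ)) : Prop :=
  ∃ x ∈ ArrComp n, A = connectedComponentIn (ArrComp n) x

/-- The translate by `p` of the fundamental region (the closed cube of side 1 around `p`). -/
def cube (n : ℕ) (p : Fin n → ℝ) : Set (Fin n → ℝ) := {x | ∀ i, |x i - p i| ≤ 1/2}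

/-- The fundamental alcove: `0 < (x, α) < 1` for every positive root `α`. -/
def FundAlcove (n : ℕ) : Set (Fin n → ℝ) :=
  {x | ∀ α ∈ PosRoot n, 0 < dotp n x α ∧ dotp n x α < 1}

/-- The hyperplane `{x : (x, α) = m}` separates `A` and `B`. -/
def Separates (n : ℕ) (α : Fin n → ℝ) (m : ℤ) (A B : Set (Fin n → ℝ)) : Prop :=
  ((∀ x ∈ A, dotp n x α < (m : ℝ)) ∧ (∀ x ∈ B, (m : ℝ) < dotp n x α)) ∨
  ((∀ x ∈ B, dotp n x α < (m : ℝ)) ∧ (∀ x ∈ A, (m : ℝ) < dotp n x α))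

/-- The number of arrangement hyperplanes separating `A` from `B`. -/
noncomputable def sepCount (n : ℕ) (A B : Set (Fin n → ℝ)) : ℕ :=
  Nat.card {q : (Fin n → ℝ) × ℤ | q.1 ∈ PosRoot n ∧ Separates n q.1 q.2 A B}

def rget (n : ℕ) (x : Fin n → ℝ) (i : ℕ) : ℝ := if h : i < n then x ⟨i, h⟩ else 0

/-- Orthogonal projection onto the hyperplane `{v : v (ℓ-1) = c}` (1-indexed coordinate `ℓ`). -/
def piMap (n : ℕ) (ℓ : ℕ) (c : ℝ) (x : Fin n → ℝ) : Fin n → ℝ :=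
  fun j => if j.val = ℓ - 1 then c else x j

/-- Identification of the hyperplane with `ℝⁿ⁻¹` via the basis `{εⱼ : j ≠ ℓ}`:
delete the (1-indexed) `ℓ`-th coordinate. -/
def delCoordR (n : ℕ) (ℓ : ℕ) (x : Fin n → ℝ) : Fin (n-1) → ℝ :=
  fun t => rget n x (if t.val < ℓ - 1 then t.val else t.val + 1)

/-- Points of the open chain region `1/2 > x₀ > x₁ > ⋯ > x_{n-1} > 0`. -/
def ChainSet (n : ℕ) : Set (Fin n → ℝ) :=
  {x | rget n x 0 < 1/2 ∧ (∀ i j : Fin n, i < j → x j < x i) ∧ 0 < rget n x (n-1)}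

/-!
An alcove inside the cube around the lattice point `p` is cut out by the sign of each `xᵢ - pᵢ`
and the order of the distances `|xᵢ - pᵢ|` (`cubeRegion`), since its walls are hyperplanes of
the arrangement. Forgetting the coordinate `ℓ` therefore maps it onto the alcove of the smaller
cube with the restricted sign and order data. For any point `w` of an alcove, the number of
hyperplanes separating it from the fundamental alcove is `∑_α |⌊⟨w, α⟩⌋|`, which splits into the
same sum for the projected point plus the terms of the roots through `ℓ`. Because `pₗ = c` is
extremal among the coordinates of `p`, these extra terms are smallest on the alcove just above
the face `xₗ = c - 1/2` lying over a given alcove `B` of the smaller cube; comparing `A` with that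
alcove shows that the projection of `A` is at least as close to the fundamental alcove as `B`.
-/

open Finset Function

section Roots

variable {n : ℕ}

lemma dotp_eq_dotProduct (x y : Fin n → ℝ) : dotp n x y = x ⬝ᵥ y := rfl

lemma stdBasis_eq_single (i : Fin n) : stdBasis n i = Pi.single i 1 := by
  ext j
  simp [stdBasis, Pi.single_apply]

lemma continuous_dotp (α : Fin n → ℝ) : Continuous fun x => dotp n x α := by
  unfold dotp
  fun_prop

def rootOf : Fin n ⊕ Fin n × Fin n × Bool → (Fin n → ℝ)
  | .inl i => (2 : ℝ) • stdBasis n i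
  | .inr (i, j, b) => if b then stdBasis n i + stdBasis n j else stdBasis n i - stdBasis n j

def rootIdx (n : ℕ) : Finset (Fin n ⊕ Fin n × Fin n × Bool) :=
  univ.disjSum (univ.filter fun ijb => ijb.1 < ijb.2.1)

lemma dotp_rootOf_inl (x : Fin n → ℝ) (i : Fin n) : dotp n x (rootOf (.inl i)) = 2 * x i := by
  simp [rootOf, dotp_eq_dotProduct, stdBasis_eq_single, dotProduct_smul, mul_comm]

lemma dotp_rootOf_inr (x : Fin n → ℝ) (i j : Fin n) (b : Bool) :
    dotp n x (rootOf (.inr (i, j, b))) = if b then x i + x j else x i - x j := by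
  cases b <;> simp [rootOf, dotp_eq_dotProduct, stdBasis_eq_single, dotProduct_add, dotProduct_sub]

lemma mem_posRoot_iff {α : Fin n → ℝ} :
    α ∈ PosRoot n ↔ ∃ ι ∈ rootIdx n, rootOf ι = α := by
  constructor
  · rintro (⟨i, rfl⟩ | ⟨i, j, hij, rfl | rfl⟩)
    · exact ⟨.inl i, by simp [rootIdx], rfl⟩
    · exact ⟨.inr (i, j, true), by simpa [rootIdx] using hij, rfl⟩
    · exact ⟨.inr (i, j, false), by simpa [rootIdx] using hij, rfl⟩
  · rintro ⟨i | ⟨i, j, _ | _⟩, hι, rfl⟩ <;>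
      simp only [rootIdx, inr_mem_disjSum, mem_filter] at hι
    · exact Or.inl ⟨i, rfl⟩
    · exact Or.inr ⟨i, j, hι.2, Or.inr rfl⟩
    · exact Or.inr ⟨i, j, hι.2, Or.inl rfl⟩

lemma rootOf_inl_apply (i t : Fin n) : rootOf (.inl i) t = if t = i then 2 else 0 := by
  simp [rootOf, stdBasis]

lemma rootOf_inr_apply_of_ne {i j t : Fin n} (hi : t ≠ i) (hj : t ≠ j) (b : Bool) :
    rootOf (.inr (i, j, b)) t = 0 := by
  cases b <;> simp [rootOf, stdBasis, hi, hj]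

lemma rootOf_inr_apply_left {i j : Fin n} (hij : i ≠ j) (b : Bool) :
    rootOf (.inr (i, j, b)) i = 1 := by
  cases b <;> simp [rootOf, stdBasis, hij]

lemma rootOf_inr_apply_right {i j : Fin n} (hij : i ≠ j) (b : Bool) :
    rootOf (.inr (i, j, b)) j = if b then 1 else -1 := by
  cases b <;> simp [rootOf, stdBasis, hij.symm]

lemma eq_or_eq_of_rootOf_inr_apply_ne_zero {i j t : Fin n} {b : Bool}
    (h : rootOf (.inr (i, j, b)) t ≠ 0) : t = i ∨ t = j := by
  by_contra! ht
  exact h (rootOf_inr_apply_of_ne ht.1 ht.2 b)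

lemma rootOf_inl_ne_rootOf_inr (i : Fin n) {k l : Fin n} (hkl : k ≠ l) (b : Bool) :
    rootOf (.inl i) ≠ rootOf (.inr (k, l, b)) := by
  intro h
  have hi := congrFun h i
  rw [rootOf_inl_apply, if_pos rfl] at hi
  by_cases hik : i = k
  · subst hik
    rw [rootOf_inr_apply_left hkl] at hi
    norm_num at hi
  by_cases hil : i = l
  · subst hil
    rw [rootOf_inr_apply_right hkl] at hi
    split_ifs at hi <;> norm_num at hi
  rw [rootOf_inr_apply_of_ne hik hil] at hi
  norm_num at hi

lemma rootOf_injOn : Set.InjOn rootOf (rootIdx n : Set (Fin n ⊕ Fin n × Fin n × Bool)) := by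
  rintro (i | ⟨i, j, b⟩) hι (k | ⟨k, l, b'⟩) hκ h <;>
    simp only [rootIdx, mem_coe, inl_mem_disjSum, inr_mem_disjSum, mem_filter, mem_univ,
      true_and] at hι hκ
  · have hi := congrFun h i
    simp only [rootOf_inl_apply] at hi
    split_ifs at hi with hik
    · rw [hik]
    · norm_num at hi
  · exact absurd h (rootOf_inl_ne_rootOf_inr i hκ.ne b')
  · exact absurd h.symm (rootOf_inl_ne_rootOf_inr k hι.ne b)
  · have hik : i = k ∨ i = l := eq_or_eq_of_rootOf_inr_apply_ne_zero (b := b') (by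
      rw [← h, rootOf_inr_apply_left hι.ne]; norm_num)
    have hjk : j = k ∨ j = l := eq_or_eq_of_rootOf_inr_apply_ne_zero (b := b') (by
      rw [← h, rootOf_inr_apply_right hι.ne]; split_ifs <;> norm_num)
    have hki : k = i ∨ k = j := eq_or_eq_of_rootOf_inr_apply_ne_zero (b := b) (by
      rw [h, rootOf_inr_apply_left hκ.ne]; norm_num)
    obtain ⟨rfl, rfl⟩ : i = k ∧ j = l := by omega
    have hj := congrFun h j
    rw [rootOf_inr_apply_right hι.ne, rootOf_inr_apply_right hι.ne] at hj
    cases b <;> cases b' <;> first | rfl | norm_num at hj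

end Roots

section Arrangement

variable {n : ℕ} {x : Fin n → ℝ}

lemma mem_arrComp_iff :
    x ∈ ArrComp n ↔ ∀ ι ∈ rootIdx n, ∀ N : ℤ, dotp n x (rootOf ι) ≠ N := by
  constructor
  · exact fun h ι hι => h _ (mem_posRoot_iff.2 ⟨ι, hι, rfl⟩)
  · rintro h α hα
    obtain ⟨ι, hι, rfl⟩ := mem_posRoot_iff.1 hα
    exact h ι hι

lemma mem_arrComp_of (htwo : ∀ i, ∀ N : ℤ, 2 * x i ≠ N)
    (hadd : ∀ i j, i ≠ j → ∀ N : ℤ, x i + x j ≠ N)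
    (hsub : ∀ i j, i ≠ j → ∀ N : ℤ, x i - x j ≠ N) :
    x ∈ ArrComp n := by
  rw [mem_arrComp_iff]
  rintro (i | ⟨i, j, _ | _⟩) hι N <;>
    simp only [rootIdx, inr_mem_disjSum, mem_filter, mem_univ, true_and] at hι <;>
    simp only [dotp_rootOf_inl, dotp_rootOf_inr, Bool.false_eq_true, if_true, if_false]
  · exact htwo i N
  · exact hsub i j hι.ne N
  · exact hadd i j hι.ne N

lemma two_mul_ne_int (hx : x ∈ ArrComp n) (i : Fin n) (N : ℤ) : 2 * x i ≠ N := by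
  rw [← dotp_rootOf_inl]
  exact mem_arrComp_iff.1 hx _ (by simp [rootIdx]) N

lemma add_ne_int (hx : x ∈ ArrComp n) {i j : Fin n} (hij : i ≠ j) (N : ℤ) :
    x i + x j ≠ N := by
  rcases hij.lt_or_gt with h | h
  · simpa [dotp_rootOf_inr] using mem_arrComp_iff.1 hx (.inr (i, j, true)) (by simpa [rootIdx]) N
  · simpa [dotp_rootOf_inr, add_comm] using
      mem_arrComp_iff.1 hx (.inr (j, i, true)) (by simpa [rootIdx]) N

lemma sub_ne_int (hx : x ∈ ArrComp n) {i j : Fin n} (hij : i ≠ j) (N : ℤ) :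
    x i - x j ≠ N := by
  rcases hij.lt_or_gt with h | h
  · simpa [dotp_rootOf_inr] using mem_arrComp_iff.1 hx (.inr (i, j, false)) (by simpa [rootIdx]) N
  · have := mem_arrComp_iff.1 hx (.inr (j, i, false)) (by simpa [rootIdx]) (-N)
    simp only [dotp_rootOf_inr, Bool.false_eq_true, if_false, Int.cast_neg] at this
    contrapose! this
    linarith

variable (p : Fin n → ℤ)

lemma abs_sub_ne_zero_of_mem_arrComp (hx : x ∈ ArrComp n) (i : Fin n) : |x i - p i| ≠ 0 := by
  rw [abs_ne_zero, sub_ne_zero]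
  intro h
  exact two_mul_ne_int hx i (2 * p i) (by rw [h]; push_cast; ring)

lemma abs_sub_ne_half_of_mem_arrComp (hx : x ∈ ArrComp n) (i : Fin n) :
    |x i - p i| ≠ 1 / 2 := by
  intro h
  rcases (abs_eq (by norm_num)).1 h with h | h
  · exact two_mul_ne_int hx i (2 * p i + 1) (by push_cast; linarith)
  · exact two_mul_ne_int hx i (2 * p i - 1) (by push_cast; linarith)

lemma abs_sub_ne_abs_sub_of_mem_arrComp (hx : x ∈ ArrComp n) {i j : Fin n} (hij : i ≠ j) :
    |x i - p i| ≠ |x j - p j| := by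
  intro h
  rcases abs_eq_abs.1 h with h | h
  · exact sub_ne_int hx hij (p i - p j) (by push_cast; linarith)
  · exact add_ne_int hx hij (p i + p j) (by push_cast; linarith)

lemma int_add_ne_int (a N : ℤ) {u : ℝ} (hu : u ≠ 0) (hu1 : |u| < 1) :
    (a : ℝ) + u ≠ N := by
  intro h
  obtain rfl : u = ((N - a : ℤ) : ℝ) := by push_cast; linarith
  rw [← Int.cast_abs] at hu1
  norm_cast at hu hu1
  rw [abs_lt] at hu1
  omega

lemma mem_arrComp_of_abs_sub (h : ∀ i, 0 < |x i - p i| ∧ |x i - p i| < 1 / 2)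
    (hinj : ∀ i j, i ≠ j → |x i - p i| ≠ |x j - p j|) : x ∈ ArrComp n := by
  have hsplit : ∀ i, x i = p i + (x i - p i) := fun i => by ring
  refine mem_arrComp_of (fun i N => ?_) (fun i j hij N => ?_) (fun i j hij N => ?_)
  · rw [hsplit i, mul_add, ← Int.cast_two, ← Int.cast_mul]
    refine int_add_ne_int _ N (by simpa using (h i).1.ne') ?_
    rw [abs_mul]
    norm_num
    linarith [(h i).2]
  · rw [hsplit i, hsplit j, add_add_add_comm, ← Int.cast_add]
    refine int_add_ne_int _ N (fun h0 => hinj i j hij ?_) ?_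
    · rw [eq_neg_of_add_eq_zero_left h0, abs_neg]
    · linarith [abs_add_le (x i - p i) (x j - p j), (h i).2, (h j).2]
  · rw [hsplit i, hsplit j, add_sub_add_comm, ← Int.cast_sub]
    refine int_add_ne_int _ N (fun h0 => hinj i j hij ?_) ?_
    · rw [sub_eq_zero.1 h0]
    · linarith [abs_sub (x i - p i) (x j - p j), (h i).2, (h j).2]

lemma abs_sub_lt_half (hx : x ∈ ArrComp n) (hxc : x ∈ cube n fun i => (p i : ℝ)) (i : Fin n) :
    |x i - p i| < 1 / 2 :=
  (hxc i).lt_of_ne (abs_sub_ne_half_of_mem_arrComp p hx i)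

end Arrangement

lemma IsPreconnected.pos_of_forall_ne_zero {X : Type*} [TopologicalSpace X] {S : Set X}
    (hS : IsPreconnected S) {f : X → ℝ} (hf : ContinuousOn f S) (hf0 : ∀ z ∈ S, f z ≠ 0)
    {x y : X} (hx : x ∈ S) (hy : y ∈ S) (hfx : 0 < f x) : 0 < f y := by
  by_contra! hfy
  obtain ⟨z, hz, hfz⟩ := hS.intermediate_value hy hx hf ⟨hfy, hfx.le⟩
  exact hf0 z hz hfz

section Counting

variable {n : ℕ}

lemma IsPreconnected.floor_dotp_lt {S : Set (Fin n → ℝ)} (hS : IsPreconnected S)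
    (hSA : S ⊆ ArrComp n) {x y : Fin n → ℝ} (hx : x ∈ S) (hy : y ∈ S) {α : Fin n → ℝ}
    (hα : α ∈ PosRoot n) :
    (⌊dotp n x α⌋ : ℝ) < dotp n y α ∧ dotp n y α < ⌊dotp n x α⌋ + 1 := by
  have hne : ∀ z ∈ S, ∀ N : ℤ, dotp n z α ≠ N := fun z hz => hSA hz α hα
  have hcont := (continuous_dotp α).continuousOn (s := S)
  constructor
  · have := hS.pos_of_forall_ne_zero (f := fun z => dotp n z α - ⌊dotp n x α⌋)
      (hcont.sub continuousOn_const) (fun z hz => sub_ne_zero.2 (hne z hz _)) hx hy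
      (sub_pos.2 ((Int.floor_le _).lt_of_ne (hne x hx _).symm))
    linarith
  · have := hS.pos_of_forall_ne_zero (f := fun z => (⌊dotp n x α⌋ + 1 : ℤ) - dotp n z α)
      (continuousOn_const.sub hcont) (fun z hz => sub_ne_zero.2 (hne z hz _).symm) hx hy
      (sub_pos.2 (by exact_mod_cast Int.lt_floor_add_one (dotp n x α)))
    push_cast at this
    linarith

lemma separates_iff {F A : Set (Fin n → ℝ)} {α : Fin n → ℝ} {a : ℤ}
    (hF : ∀ x ∈ F, 0 < dotp n x α ∧ dotp n x α < 1)
    (hA : ∀ x ∈ A, a < dotp n x α ∧ dotp n x α < a + 1) (hFne : F.Nonempty)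
    (hAne : A.Nonempty) (b : ℤ) : Separates n α b F A ↔ b ∈ Ioc (min 0 a) (max 0 a) := by
  obtain ⟨f, hf⟩ := hFne
  obtain ⟨y, hy⟩ := hAne
  have hf' := hF f hf
  have hy' := hA y hy
  rw [mem_Ioc]
  constructor
  · rintro (⟨h1, h2⟩ | ⟨h1, h2⟩)
    · have h₁ : (0 : ℝ) < b := by linarith [h1 f hf]
      have h₂ : (b : ℝ) < a + 1 := by linarith [h2 y hy]
      norm_cast at h₁ h₂
      omega
    · have h₁ : (b : ℝ) < 1 := by linarith [h2 f hf]
      have h₂ : (a : ℝ) < b := by linarith [h1 y hy]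
      norm_cast at h₁ h₂
      omega
  · intro hb
    obtain ⟨h1, h2⟩ | ⟨h1, h2⟩ : (1 ≤ b ∧ b ≤ a) ∨ (a + 1 ≤ b ∧ b ≤ 0) := by
      omega
    · have h₁ : (1 : ℝ) ≤ b := by exact_mod_cast h1
      have h₂ : (b : ℝ) ≤ a := by exact_mod_cast h2
      exact Or.inl ⟨fun x hx => by linarith [hF x hx], fun x hx => by linarith [hA x hx]⟩
    · have h₁ : (a : ℝ) + 1 ≤ b := by exact_mod_cast h1
      have h₂ : (b : ℝ) ≤ 0 := by exact_mod_cast h2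
      exact Or.inr ⟨fun x hx => by linarith [hA x hx], fun x hx => by linarith [hF x hx]⟩

lemma fundAlcove_nonempty (n : ℕ) : (FundAlcove n).Nonempty := by
  set ε : ℝ := 1 / (2 * n + 1) with hε_def
  have hε : 0 < ε := by positivity
  have hεn : (2 * n + 1) * ε = 1 := by rw [hε_def]; field_simp
  refine ⟨fun i => (n - i) * ε, fun α hα => ?_⟩
  obtain ⟨ι, hι, rfl⟩ := mem_posRoot_iff.1 hα
  rcases ι with i | ⟨i, j, _ | _⟩ <;>
    simp only [rootIdx, inl_mem_disjSum, inr_mem_disjSum, mem_filter, mem_univ, true_and] at hι <;>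
    simp only [dotp_rootOf_inl, dotp_rootOf_inr, Bool.false_eq_true, if_true, if_false]
  · have hi : (i : ℝ) + 1 ≤ n := by exact_mod_cast i.isLt
    constructor <;> nlinarith [(Nat.cast_nonneg i : (0 : ℝ) ≤ i)]
  · have hij : (i : ℝ) + 1 ≤ j := by exact_mod_cast hι
    have hj : (j : ℝ) + 1 ≤ n := by exact_mod_cast j.isLt
    constructor <;> nlinarith [(Nat.cast_nonneg i : (0 : ℝ) ≤ i)]
  · have hij : (i : ℝ) + 1 ≤ j := by exact_mod_cast hι
    have hj : (j : ℝ) + 1 ≤ n := by exact_mod_cast j.isLt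
    constructor <;> nlinarith [(Nat.cast_nonneg i : (0 : ℝ) ≤ i)]

noncomputable def pairFloor (w : Fin n → ℝ) (i j : Fin n) : ℕ :=
  ⌊w i + w j⌋.natAbs + ⌊w i - w j⌋.natAbs

/-- `∑_α |⌊⟨w, α⟩⌋|` over the positive roots `α`. -/
noncomputable def rootFloorSum (n : ℕ) (w : Fin n → ℝ) : ℕ :=
  ∑ i, ⌊2 * w i⌋.natAbs + ∑ i, ∑ j, if i < j then pairFloor w i j else 0

lemma sum_rootIdx_natAbs_floor (w : Fin n → ℝ) :
    ∑ ι ∈ rootIdx n, ⌊dotp n w (rootOf ι)⌋.natAbs = rootFloorSum n w := by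
  simp only [rootIdx, sum_disjSum, sum_filter, Fintype.sum_prod_type, Fintype.sum_bool,
    dotp_rootOf_inl, dotp_rootOf_inr, rootFloorSum, pairFloor, if_true, Bool.false_eq_true,
    if_false]
  congr! 3 with i _ j
  split_ifs <;> rfl

theorem sepCount_eq_rootFloorSum {A : Set (Fin n → ℝ)} (hA : IsAlcove n A) {w : Fin n → ℝ}
    (hw : w ∈ A) : sepCount n (FundAlcove n) A = rootFloorSum n w := by
  classical
  obtain ⟨x₀, -, rfl⟩ := hA
  set a : Fin n ⊕ Fin n × Fin n × Bool → ℤ := fun ι => ⌊dotp n w (rootOf ι)⌋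
  have hsep : ∀ ι ∈ rootIdx n, ∀ b, Separates n (rootOf ι) b (FundAlcove n)
      (connectedComponentIn (ArrComp n) x₀) ↔ b ∈ Ioc (min 0 (a ι)) (max 0 (a ι)) :=
    fun ι hι => separates_iff (fun x hx => hx _ (mem_posRoot_iff.2 ⟨ι, hι, rfl⟩))
      (fun y hy => isPreconnected_connectedComponentIn.floor_dotp_lt
        (connectedComponentIn_subset _ _) hw hy (mem_posRoot_iff.2 ⟨ι, hι, rfl⟩))
      (fundAlcove_nonempty n) ⟨w, hw⟩
  have hset : {q : (Fin n → ℝ) × ℤ | q.1 ∈ PosRoot n ∧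
      Separates n q.1 q.2 (FundAlcove n) (connectedComponentIn (ArrComp n) x₀)} =
      ↑((rootIdx n).biUnion fun ι =>
        (Ioc (min 0 (a ι)) (max 0 (a ι))).image (rootOf ι, ·)) := by
    ext ⟨α, b⟩
    simp only [Set.mem_ofPred_eq, coe_biUnion, mem_coe, coe_image, Set.mem_iUnion, Set.mem_image,
      Prod.mk.injEq, exists_prop]
    constructor
    · rintro ⟨hα, hs⟩
      obtain ⟨ι, hι, rfl⟩ := mem_posRoot_iff.1 hα
      exact ⟨ι, hι, b, (hsep ι hι b).1 hs, rfl, rfl⟩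
    · rintro ⟨ι, hι, b, hb, rfl, rfl⟩
      exact ⟨mem_posRoot_iff.2 ⟨ι, hι, rfl⟩, (hsep ι hι b).2 hb⟩
  rw [sepCount, hset, Nat.card_coe_set_eq, Set.ncard_coe_finset, card_biUnion,
    ← sum_rootIdx_natAbs_floor]
  · refine sum_congr rfl fun ι _ => ?_
    rw [card_image_of_injective _ (Prod.mk_right_injective _), Int.card_Ioc]
    simp only [a]
    omega
  · intro ι hι κ hκ hne
    refine disjoint_left.2 fun q h₁ h₂ => hne (rootOf_injOn hι hκ ?_)
    obtain ⟨b, -, rfl⟩ := mem_image.1 h₁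
    obtain ⟨b', -, h⟩ := mem_image.1 h₂
    exact (Prod.ext_iff.1 h).1.symm

end Counting

section CubeRegion

def boolSign (b : Bool) : ℝ := if b then 1 else -1

lemma boolSign_mul_self (b : Bool) : boolSign b * boolSign b = 1 := by
  cases b <;> norm_num [boolSign]

lemma abs_boolSign_mul (b : Bool) (r : ℝ) : |boolSign b * r| = |r| := by
  cases b <;> simp [boolSign]

variable {n : ℕ} (p : Fin n → ℤ) (s : Fin n → Bool) (q : Fin n → ℝ)

def signedOffset (x : Fin n → ℝ) (i : Fin n) : ℝ := boolSign (s i) * (x i - p i)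

/-- The alcove of the cube around `p` on which `xᵢ - pᵢ` has the sign `s i` and the distances
`|xᵢ - pᵢ|` are ordered like the `q i`. -/
def cubeRegion : Set (Fin n → ℝ) :=
  {x | ∀ i, 0 < signedOffset p s x i ∧ signedOffset p s x i < 1 / 2 ∧
    ∀ j, q i < q j → signedOffset p s x i < signedOffset p s x j}

variable {p s q}

lemma abs_signedOffset (x : Fin n → ℝ) (i : Fin n) : |signedOffset p s x i| = |x i - p i| :=
  abs_boolSign_mul _ _

lemma abs_sub_eq_signedOffset {x : Fin n → ℝ} {i : Fin n} (h : 0 < signedOffset p s x i) :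
    |x i - p i| = signedOffset p s x i := by
  rw [← abs_signedOffset, abs_of_pos h]

lemma cubeRegion_subset_cube : cubeRegion p s q ⊆ cube n fun i => (p i : ℝ) := fun x hx i => by
  rw [abs_sub_eq_signedOffset (hx i).1]
  exact (hx i).2.1.le

lemma cubeRegion_subset_arrComp (hq : Injective q) : cubeRegion p s q ⊆ ArrComp n := by
  intro x hx
  refine mem_arrComp_of_abs_sub p (fun i => ?_) (fun i j hij => ?_)
  · rw [abs_sub_eq_signedOffset (hx i).1]
    exact ⟨(hx i).1, (hx i).2.1⟩
  · rw [abs_sub_eq_signedOffset (hx i).1, abs_sub_eq_signedOffset (hx j).1]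
    rcases (hq.ne hij).lt_or_gt with h | h
    · exact ((hx i).2.2 j h).ne
    · exact ((hx j).2.2 i h).ne'

lemma convex_cubeRegion : Convex ℝ (cubeRegion p s q) := by
  intro x hx y hy a b ha hb hab
  have hcomb : ∀ i, signedOffset p s (a • x + b • y) i =
      a * signedOffset p s x i + b * signedOffset p s y i := fun i => by
    simp only [signedOffset, Pi.add_apply, Pi.smul_apply, smul_eq_mul]
    linear_combination (boolSign (s i) * p i) * hab
  intro i
  simp only [hcomb]
  refine ⟨?_, ?_, fun j hij => ?_⟩
  · simpa using convex_Ioi (0 : ℝ) (hx i).1 (hy i).1 ha hb hab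
  · simpa using convex_Iio (1 / 2 : ℝ) (hx i).2.1 (hy i).2.1 ha hb hab
  · have := convex_Ioi (0 : ℝ) (sub_pos.2 ((hx i).2.2 j hij)) (sub_pos.2 ((hy i).2.2 j hij))
      ha hb hab
    simp only [Set.mem_Ioi, smul_eq_mul] at this
    linarith

/-- The walls of the region are hyperplanes of the arrangement, so a connected subset of the
complement cannot leave it. -/
theorem connectedComponentIn_eq_cubeRegion (hq : Injective q) {x : Fin n → ℝ}
    (hx : x ∈ cubeRegion p s q) : connectedComponentIn (ArrComp n) x = cubeRegion p s q := by
  refine subset_antisymm (fun y hy => ?_)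
    (convex_cubeRegion.isPreconnected.subset_connectedComponentIn hx
      (cubeRegion_subset_arrComp hq))
  have hxC := mem_connectedComponentIn (cubeRegion_subset_arrComp hq hx)
  have hCA := connectedComponentIn_subset (ArrComp n) x
  have hcont : ∀ i, Continuous (signedOffset p s · i) := fun i => by
    unfold signedOffset
    fun_prop
  have wall : ∀ f : (Fin n → ℝ) → ℝ, Continuous f →
      (∀ z ∈ connectedComponentIn (ArrComp n) x, f z ≠ 0) → 0 < f x → 0 < f y :=
    fun f hf hf0 hfx =>
      isPreconnected_connectedComponentIn.pos_of_forall_ne_zero hf.continuousOn hf0 hxC hy hfx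
  refine fun i => ⟨?_, ?_, fun j hij => ?_⟩
  · refine wall _ (hcont i) (fun z hz h0 => ?_) (hx i).1
    refine abs_sub_ne_zero_of_mem_arrComp p (hCA hz) i ?_
    rw [← abs_signedOffset, h0, abs_zero]
  · refine sub_pos.1 (wall (fun z => 1 / 2 - signedOffset p s z i)
      (continuous_const.sub (hcont i)) (fun z hz h0 => ?_) (sub_pos.2 (hx i).2.1))
    refine abs_sub_ne_half_of_mem_arrComp p (hCA hz) i ?_
    rw [← abs_signedOffset, ← sub_eq_zero.1 h0, abs_of_pos (by norm_num)]
  · refine sub_pos.1 (wall (fun z => signedOffset p s z j - signedOffset p s z i)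
      ((hcont j).sub (hcont i)) (fun z hz h0 => ?_) (sub_pos.2 ((hx i).2.2 j hij)))
    refine abs_sub_ne_abs_sub_of_mem_arrComp p (hCA hz) (ne_of_apply_ne q hij.ne) ?_
    rw [← abs_signedOffset, ← abs_signedOffset (i := j), sub_eq_zero.1 h0]

lemma isAlcove_cubeRegion (hq : Injective q) {x : Fin n → ℝ} (hx : x ∈ cubeRegion p s q) :
    IsAlcove n (cubeRegion p s q) :=
  ⟨x, cubeRegion_subset_arrComp hq hx, (connectedComponentIn_eq_cubeRegion hq hx).symm⟩

variable (p)

lemma signedOffset_decide_lt (x : Fin n → ℝ) (i : Fin n) :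
    signedOffset p (fun i => decide ((p i : ℝ) < x i)) x i = |x i - p i| := by
  by_cases h : (p i : ℝ) < x i
  · simp [signedOffset, boolSign, h, abs_of_pos (sub_pos.2 h)]
  · simp [signedOffset, boolSign, h, abs_of_nonpos (sub_nonpos.2 (not_lt.1 h))]

lemma injective_abs_sub {x : Fin n → ℝ} (hx : x ∈ ArrComp n) :
    Injective fun i => |x i - p i| :=
  fun _ _ h => by_contra fun hij => abs_sub_ne_abs_sub_of_mem_arrComp p hx hij h

lemma mem_cubeRegion_of_mem_cube {x : Fin n → ℝ} (hx : x ∈ ArrComp n)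
    (hxc : x ∈ cube n fun i => (p i : ℝ)) :
    x ∈ cubeRegion p (fun i => decide ((p i : ℝ) < x i)) (fun i => |x i - p i|) := fun i => by
  simp only [signedOffset_decide_lt]
  exact ⟨(abs_nonneg _).lt_of_ne (abs_sub_ne_zero_of_mem_arrComp p hx i).symm,
    abs_sub_lt_half p hx hxc i, fun j hij => hij⟩

lemma connectedComponentIn_eq_cubeRegion_of_mem_cube {x : Fin n → ℝ} (hx : x ∈ ArrComp n)
    (hxc : x ∈ cube n fun i => (p i : ℝ)) :
    connectedComponentIn (ArrComp n) x =
      cubeRegion p (fun i => decide ((p i : ℝ) < x i)) (fun i => |x i - p i|) :=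
  connectedComponentIn_eq_cubeRegion (injective_abs_sub p hx) (mem_cubeRegion_of_mem_cube p hx hxc)

end CubeRegion

section Projection

lemma exists_gap {ι : Type*} [Fintype ι] (d : ι → ℝ) (P Q : ι → Prop)
    (hd : ∀ i, 0 < d i ∧ d i < 1 / 2) (hPQ : ∀ i j, P i → Q j → d i < d j) :
    ∃ z, 0 < z ∧ z < 1 / 2 ∧ (∀ i, P i → d i < z) ∧ ∀ j, Q j → z < d j := by
  classical
  obtain ⟨z, hlo, hhi⟩ := Finset.exists_between (s := insert 0 ((univ.filter P).image d))
    (t := insert (1 / 2) ((univ.filter Q).image d)) (insert_nonempty _ _) (insert_nonempty _ _) (by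
      simp only [mem_insert, mem_image, mem_filter, mem_univ, true_and]
      rintro _ (rfl | ⟨i, hi, rfl⟩) _ (rfl | ⟨j, hj, rfl⟩)
      · norm_num
      · exact (hd j).1
      · exact (hd i).2
      · exact hPQ i j hi hj)
  simp only [mem_insert, mem_image, mem_filter, mem_univ, true_and, forall_eq_or_imp,
    forall_exists_index, and_imp, forall_apply_eq_imp_iff₂] at hlo hhi
  exact ⟨z, hlo.1, hhi.1, hlo.2, hhi.2⟩


variable {m : ℕ} (pos : Fin (m + 1))

theorem image_comp_succAbove_cubeRegion (p : Fin (m + 1) → ℤ) (s : Fin (m + 1) → Bool)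
    (q : Fin (m + 1) → ℝ) :
    (· ∘ pos.succAbove) '' cubeRegion p s q =
      cubeRegion (p ∘ pos.succAbove) (s ∘ pos.succAbove) (q ∘ pos.succAbove) := by
  ext y
  constructor
  · rintro ⟨x, hx, rfl⟩ t
    exact ⟨(hx _).1, (hx _).2.1, fun u => (hx _).2.2 _⟩
  intro hy
  set d := signedOffset (p ∘ pos.succAbove) (s ∘ pos.succAbove) y
  obtain ⟨z, hz₀, hz₁, hlo, hhi⟩ := exists_gap d (fun t => q (pos.succAbove t) < q pos)
    (fun t => q pos < q (pos.succAbove t)) (fun t => ⟨(hy t).1, (hy t).2.1⟩)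
    fun t u ht hu => (hy t).2.2 u (ht.trans hu)
  set x : Fin (m + 1) → ℝ := Fin.insertNth pos (p pos + boolSign (s pos) * z) y
  have hxpos : signedOffset p s x pos = z := by
    simp only [signedOffset, x, Fin.insertNth_apply_same, add_sub_cancel_left, ← mul_assoc,
      boolSign_mul_self, one_mul]
  have hxsucc : ∀ t, signedOffset p s x (pos.succAbove t) = d t := fun t => by
    simp [signedOffset, x, d]
  refine ⟨x, ?_, Fin.insertNth_comp_succAbove _ _ _⟩
  refine (Fin.forall_iff_succAbove pos).2 ⟨?_, fun t => ?_⟩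
  · rw [hxpos]
    refine ⟨hz₀, hz₁, (Fin.forall_iff_succAbove pos).2 ⟨fun h => absurd h (lt_irrefl _),
      fun u hu => ?_⟩⟩
    rw [hxsucc]
    exact hhi u hu
  · rw [hxsucc]
    refine ⟨(hy t).1, (hy t).2.1,
      (Fin.forall_iff_succAbove pos).2 ⟨fun h => ?_, fun u hu => ?_⟩⟩
    · rw [hxpos]
      exact hlo t h
    · rw [hxsucc]
      exact (hy t).2.2 u hu

end Projection

section FloorSum

variable {m : ℕ} (pos : Fin (m + 1))

noncomputable def extraFloorSum (w : Fin (m + 1) → ℝ) : ℕ :=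
  ⌊2 * w pos⌋.natAbs +
    ∑ t, ((if pos < pos.succAbove t then pairFloor w pos (pos.succAbove t) else 0) +
      if pos.succAbove t < pos then pairFloor w (pos.succAbove t) pos else 0)

theorem rootFloorSum_succAbove (w : Fin (m + 1) → ℝ) :
    rootFloorSum (m + 1) w = rootFloorSum m (w ∘ pos.succAbove) + extraFloorSum pos w := by
  simp only [rootFloorSum, extraFloorSum, Fin.sum_univ_succAbove _ pos, lt_irrefl, if_false,
    zero_add, Fin.succAbove_lt_succAbove_iff, sum_add_distrib, Function.comp_apply]
  have hcomp : ∀ i j, pairFloor (w ∘ pos.succAbove) i j =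
      pairFloor w (pos.succAbove i) (pos.succAbove j) := fun _ _ => rfl
  simp only [hcomp]
  ring

end FloorSum

section Minimality

variable {m : ℕ} (pos : Fin (m + 1)) {p : Fin (m + 1) → ℤ}

/-- `x` sits just above the face `xₚₒₛ = pₚₒₛ - 1/2` of the cube, where every root through
`pos` takes its smallest possible floor. -/
theorem extraFloorSum_le (h0 : 0 < p pos) (hlt : ∀ i < pos, -p pos < p i ∧ p i ≤ p pos)
    (hgt : ∀ i, pos < i → -p pos < p i ∧ p i < p pos) {w x : Fin (m + 1) → ℝ}
    (hw : ∀ i, |w i - p i| < 1 / 2) (hx0 : 0 < p pos - x pos) (hx1 : p pos - x pos < 1 / 2)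
    (hx : ∀ t, |x (pos.succAbove t) - p (pos.succAbove t)| < p pos - x pos) :
    extraFloorSum pos x ≤ extraFloorSum pos w := by
  have hwpos := abs_lt.1 (hw pos)
  refine add_le_add ?_ (sum_le_sum fun t _ => ?_)
  · have e : ⌊2 * x pos⌋ = 2 * p pos - 1 := Int.floor_eq_iff.2 ⟨by push_cast; linarith,
      by push_cast; linarith⟩
    have b : 2 * p pos - 1 ≤ ⌊2 * w pos⌋ := Int.le_floor.2 (by push_cast; linarith)
    omega
  set i := pos.succAbove t
  have hxi := abs_lt.1 (hx t)
  have hwi := abs_lt.1 (hw i)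
  have e₁ : ⌊x i + x pos⌋ = p i + p pos - 1 :=
    Int.floor_eq_iff.2 ⟨by push_cast; linarith, by push_cast; linarith⟩
  have b₁ : p i + p pos - 1 ≤ ⌊w i + w pos⌋ := Int.le_floor.2 (by push_cast; linarith)
  rcases (show i ≠ pos from pos.succAbove_ne t).lt_or_gt with h | h
  · obtain ⟨hp₁, hp₂⟩ := hlt i h
    have e₂ : ⌊x i - x pos⌋ = p i - p pos :=
      Int.floor_eq_iff.2 ⟨by push_cast; linarith, by push_cast; linarith⟩
    have b₂ : ⌊w i - w pos⌋ ≤ p i - p pos := Int.floor_le_iff.2 (by push_cast; linarith)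
    simp only [h, h.not_gt, if_true, if_false, zero_add, pairFloor]
    omega
  · obtain ⟨hp₁, hp₂⟩ := hgt i h
    have e₂ : ⌊x pos - x i⌋ = p pos - p i - 1 :=
      Int.floor_eq_iff.2 ⟨by push_cast; linarith, by push_cast; linarith⟩
    have b₂ : p pos - p i - 1 ≤ ⌊w pos - w i⌋ := Int.le_floor.2 (by push_cast; linarith)
    simp only [h, h.not_gt, if_true, if_false, add_zero, pairFloor, add_comm (x pos),
      add_comm (w pos)]
    omega

end Minimality

lemma Fin.insertNth_injective_of_forall_ne {m : ℕ} {α : Type*} (pos : Fin (m + 1)) {a : α}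
    {f : Fin m → α} (hf : Injective f) (ha : ∀ t, f t ≠ a) :
    Injective (Fin.insertNth pos a f) := by
  intro i j hij
  rcases pos.eq_self_or_eq_succAbove i with hi | ⟨t, hi⟩ <;>
    rcases pos.eq_self_or_eq_succAbove j with hj | ⟨u, hj⟩ <;> rw [hi, hj] at hij ⊢ <;>
    simp only [Fin.insertNth_apply_same, Fin.insertNth_apply_succAbove] at hij
  · exact (ha u hij.symm).elim
  · exact (ha t hij).elim
  · rw [hf hij]

def IsDistinguished (n : ℕ) (c : Fin n → ℝ) (A : Set (Fin n → ℝ)) : Prop :=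
  IsAlcove n A ∧ A ⊆ cube n c ∧
    ∀ B, IsAlcove n B → B ⊆ cube n c →
      sepCount n (FundAlcove n) A ≤ sepCount n (FundAlcove n) B

section Lift

variable {m : ℕ} (pos : Fin (m + 1)) {p : Fin (m + 1) → ℤ}

/-- Every alcove of the smaller cube is the image of the alcove of the big cube lying just above
its face `xₚₒₛ = pₚₒₛ - 1/2`. -/
theorem exists_lift_above_face {v : Fin m → ℝ} (hv : v ∈ ArrComp m)
    (hvc : v ∈ cube m fun t => (p (pos.succAbove t) : ℝ)) :
    ∃ L x, IsAlcove (m + 1) L ∧ L ⊆ cube (m + 1) (fun i => (p i : ℝ)) ∧ x ∈ L ∧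
      x ∘ pos.succAbove = v ∧ 0 < p pos - x pos ∧ p pos - x pos < 1 / 2 ∧
      ∀ t, |x (pos.succAbove t) - p (pos.succAbove t)| < p pos - x pos := by
  have hvB := mem_cubeRegion_of_mem_cube (p ∘ pos.succAbove) hv hvc
  set sB := fun t => decide (((p ∘ pos.succAbove) t : ℝ) < v t)
  set qB := fun t => |v t - (p ∘ pos.succAbove) t|
  have hqB : ∀ t, qB t < 1 := fun t => (abs_sub_lt_half _ hv hvc t).trans (by norm_num)
  set L := cubeRegion p (Fin.insertNth pos false sB) (Fin.insertNth pos 1 qB)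
  obtain ⟨x, hxL, rfl⟩ : v ∈ (· ∘ pos.succAbove) '' L := by
    rwa [image_comp_succAbove_cubeRegion, Fin.insertNth_comp_succAbove,
      Fin.insertNth_comp_succAbove]
  have hq : Injective (Fin.insertNth pos 1 qB) :=
    Fin.insertNth_injective_of_forall_ne pos (injective_abs_sub _ hv) fun t => (hqB t).ne
  have hoff : signedOffset p (Fin.insertNth pos false sB) x pos = p pos - x pos := by
    simp [signedOffset, boolSign]
  refine ⟨L, x, isAlcove_cubeRegion hq hxL, cubeRegion_subset_cube, hxL, rfl, ?_⟩
  obtain ⟨h₁, h₂, -⟩ := hxL pos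
  rw [hoff] at h₁ h₂
  refine ⟨h₁, h₂, fun t => ?_⟩
  have := (hxL (pos.succAbove t)).2.2 pos (by simpa using hqB t)
  rwa [hoff, ← abs_sub_eq_signedOffset (hxL _).1] at this

end Lift

theorem IsDistinguished.image_comp_succAbove {m : ℕ} (pos : Fin (m + 1)) {p : Fin (m + 1) → ℤ}
    (h0 : 0 < p pos) (hlt : ∀ i < pos, -p pos < p i ∧ p i ≤ p pos)
    (hgt : ∀ i, pos < i → -p pos < p i ∧ p i < p pos) {A : Set (Fin (m + 1) → ℝ)}
    (hA : IsDistinguished (m + 1) (fun i => (p i : ℝ)) A) :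
    IsDistinguished m (fun t => (p (pos.succAbove t) : ℝ)) ((· ∘ pos.succAbove) '' A) := by
  obtain ⟨⟨w, hw, rfl⟩, hcube, hmin⟩ := hA
  have hwA := mem_connectedComponentIn hw
  obtain ⟨s, q, hq, hA⟩ : ∃ s q, Injective q ∧ connectedComponentIn (ArrComp (m + 1)) w =
      cubeRegion p s q :=
    ⟨_, _, injective_abs_sub p hw,
      connectedComponentIn_eq_cubeRegion_of_mem_cube p hw (hcube hwA)⟩
  have himg : (· ∘ pos.succAbove) '' connectedComponentIn (ArrComp (m + 1)) w =
      cubeRegion (p ∘ pos.succAbove) (s ∘ pos.succAbove) (q ∘ pos.succAbove) := by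
    rw [hA, image_comp_succAbove_cubeRegion]
  have hw' := Set.mem_image_of_mem (· ∘ pos.succAbove) hwA
  have hA' : IsAlcove m ((· ∘ pos.succAbove) '' connectedComponentIn (ArrComp (m + 1)) w) := by
    rw [himg] at hw' ⊢
    exact isAlcove_cubeRegion (hq.comp pos.succAbove_right_injective) hw'
  refine ⟨hA', himg ▸ cubeRegion_subset_cube, ?_⟩
  rintro B ⟨v, hv, rfl⟩ hBc
  obtain ⟨L, x, hL, hLc, hxL, rfl, hx0, hx1, hx⟩ :=
    exists_lift_above_face pos hv (hBc (mem_connectedComponentIn hv))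
  have key := hmin L hL hLc
  rw [sepCount_eq_rootFloorSum ⟨w, hw, rfl⟩ hwA, sepCount_eq_rootFloorSum hL hxL,
    rootFloorSum_succAbove pos, rootFloorSum_succAbove pos] at key
  rw [sepCount_eq_rootFloorSum hA' hw',
    sepCount_eq_rootFloorSum ⟨_, hv, rfl⟩ (mem_connectedComponentIn hv)]
  have := extraFloorSum_le pos h0 hlt hgt (abs_sub_lt_half p hw (hcube hwA)) hx0 hx1 hx
  omega

lemma delCoordR_eq_comp_succAbove {m ℓ : ℕ} (hℓ : ℓ - 1 < m + 1) (x : Fin (m + 1) → ℝ) :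
    delCoordR (m + 1) ℓ x = x ∘ Fin.succAbove ⟨ℓ - 1, hℓ⟩ := by
  funext t
  have ht : (if t.val < ℓ - 1 then t.val else t.val + 1) < m + 1 := by
    have := t.isLt
    split_ifs <;> omega
  simp only [delCoordR, rget, dif_pos ht, Function.comp_apply]
  congr 1
  ext
  simp only [Fin.succAbove, Fin.lt_def, Fin.val_castSucc]
  split_ifs <;> simp_all

lemma delCoordR_piMap {m ℓ : ℕ} (hℓ : ℓ - 1 < m + 1) (c : ℝ) (x : Fin (m + 1) → ℝ) :
    delCoordR (m + 1) ℓ (piMap (m + 1) ℓ c x) = delCoordR (m + 1) ℓ x := by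
  rw [delCoordR_eq_comp_succAbove hℓ, delCoordR_eq_comp_succAbove hℓ]
  funext t
  exact if_neg fun h => Fin.succAbove_ne _ t (Fin.ext h)

theorem stmt19_general (n ℓ : ℕ) (hn : 2 ≤ n) (h2 : ℓ ≤ n)
    (c : ℕ)
    (p : Fin n → ℤ)
    (hp : ∀ i : Fin n,
      (i.val = ℓ - 1 → p i = (c : ℤ)) ∧
      (i.val < ℓ - 1 → -(c : ℤ) < p i ∧ p i ≤ (c : ℤ)) ∧
      (ℓ ≤ i.val → -(c : ℤ) < p i ∧ p i < (c : ℤ)))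
    (A : Set (Fin n → ℝ)) (hA : IsAlcove n A)
    (hcube : A ⊆ cube n (fun i => (p i : ℝ)))
    (hdist : ∀ B, IsAlcove n B → B ⊆ cube n (fun i => (p i : ℝ)) →
      sepCount n (FundAlcove n) A ≤ sepCount n (FundAlcove n) B) :
    IsAlcove (n-1) ((fun x => delCoordR n ℓ (piMap n ℓ (c : ℝ) x)) '' A) ∧
    ((fun x => delCoordR n ℓ (piMap n ℓ (c : ℝ) x)) '' A)
        ⊆ cube (n-1) (delCoordR n ℓ (fun i => (p i : ℝ))) ∧
    ∀ B, IsAlcove (n-1) B → B ⊆ cube (n-1) (delCoordR n ℓ (fun i => (p i : ℝ))) →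
      sepCount (n-1) (FundAlcove (n-1))
          ((fun x => delCoordR n ℓ (piMap n ℓ (c : ℝ) x)) '' A)
        ≤ sepCount (n-1) (FundAlcove (n-1)) B := by
  obtain ⟨m, rfl⟩ : ∃ m, n = m + 1 := ⟨n - 1, by omega⟩
  have hℓ : ℓ - 1 < m + 1 := by omega
  set pos : Fin (m + 1) := ⟨ℓ - 1, hℓ⟩
  have hpos : p pos = c := (hp pos).1 rfl
  have hlt : ∀ i < pos, -p pos < p i ∧ p i ≤ p pos := fun i hi => hpos ▸ (hp i).2.1 hi
  have hgt : ∀ i, pos < i → -p pos < p i ∧ p i < p pos := fun i hi =>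
    hpos ▸ (hp i).2.2 (by rw [Fin.lt_def] at hi; simp only [pos] at hi; omega)
  have h0 : 0 < p pos := by
    obtain ⟨t⟩ : Nonempty (Fin m) := ⟨⟨0, by omega⟩⟩
    rcases (pos.succAbove_ne t).lt_or_gt with h | h
    · linarith [hlt _ h]
    · linarith [hgt _ h]
  have hproj :
      (fun x => delCoordR (m + 1) ℓ (piMap (m + 1) ℓ c x)) = (· ∘ pos.succAbove) := by
    funext x
    rw [delCoordR_piMap hℓ, delCoordR_eq_comp_succAbove hℓ]
  rw [hproj, delCoordR_eq_comp_succAbove hℓ]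
  exact IsDistinguished.image_comp_succAbove pos h0 hlt hgt ⟨hA, hcube, hdist⟩

/-- Under the projection onto the hyperplane `H = {v : v_ℓ = ⌈k/2n⌉}` identified with
`ℝⁿ⁻¹`, the image of any distinguished alcove of the type `Cₙ` arrangement whose coroot
lattice point lies on `H` and corresponds to a symmetric `2n`-core with first part `k` is a
distinguished alcove of the type `C_{n-1}` arrangement. -/
theorem stmt19 (n k ℓ : ℕ) (hn : 2 ≤ n) (hk : 1 ≤ k) (h1 : 1 ≤ ℓ) (h2 : ℓ ≤ n)
    (hmodn : ℓ ≡ k [MOD n]) (hmod2n : 1 ≤ k % (2*n) ∧ k % (2*n) ≤ n)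
    (c : ℕ) (hc : c = (k + 2*n - 1)/(2*n))
    (p : Fin n → ℤ)
    (hp : ∀ i : Fin n,
      (i.val = ℓ - 1 → p i = (c : ℤ)) ∧
      (i.val < ℓ - 1 → -(c : ℤ) < p i ∧ p i ≤ (c : ℤ)) ∧
      (ℓ ≤ i.val → -(c : ℤ) < p i ∧ p i < (c : ℤ)))
    (A : Set (Fin n → ℝ)) (hA : IsAlcove n A)
    (hcube : A ⊆ cube n (fun i => (p i : ℝ)))
    (hdist : ∀ B, IsAlcove n B → B ⊆ cube n (fun i => (p i : ℝ)) →
      sepCount n (FundAlcove n) A ≤ sepCount n (FundAlcove n) B) :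
    IsAlcove (n-1) ((fun x => delCoordR n ℓ (piMap n ℓ (c : ℝ) x)) '' A) ∧
    ((fun x => delCoordR n ℓ (piMap n ℓ (c : ℝ) x)) '' A)
        ⊆ cube (n-1) (delCoordR n ℓ (fun i => (p i : ℝ))) ∧
    ∀ B, IsAlcove (n-1) B → B ⊆ cube (n-1) (delCoordR n ℓ (fun i => (p i : ℝ))) →
      sepCount (n-1) (FundAlcove (n-1))
          ((fun x => delCoordR n ℓ (piMap n ℓ (c : ℝ) x)) '' A)
        ≤ sepCount (n-1) (FundAlcove (n-1)) B :=
  stmt19_general n ℓ hn h2 c p hp A hA hcube hdist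
end
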